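/- arXiv:1610.08156 — 9 statements merged into one kernel-verified Lean document; each statement's English description precedes it below -/
import Mathlib

section
/- Let R be a commutative Noetherian ring with 1 such that the maximal spectrum Max R has dimension d (as a topological space with the Zariski topology), and let A be a finite (not necessarily unital, commutative, or associative) R-algebra, i.e., a finitely generated R-module with an R-bilinear multiplication A × A → A. If for every maximal ideal p of R the algebra A(p) := A ⊗_R R(p) can be generated by n elements as a non-unital R(p)-algebra, then A can be generated by n + d elements as a non-unital R-algebra. -/
open TensorProduct

/-- `s` generates `A` as a non-unital (non-associative) `R`-algebra: every `R`-submodule of `A`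
containing `s` and closed under multiplication is all of `A` (equivalently, the smallest such
submodule is `⊤`). -/
def GeneratesAsNonUnitalAlgebra (R : Type*) {A : Type*} [CommSemiring R]
    [NonUnitalNonAssocSemiring A] [Module R A] (s : Set A) : Prop :=
  ∀ B : Submodule R A, s ⊆ (B : Set A) → (∀ x ∈ B, ∀ y ∈ B, x * y ∈ B) → B = ⊤

/-!
Forster–Swan argument. For a finite set `s ⊆ A` and a maximal ideal `p`, let `g_s(p)` be the
least number of elements that must be added to `s` to generate `A` modulo `p A`; by Nakayama this
is the number of generators of the fibre `A(p)` missing from `s`, so `g_s ≤ n`, and `g_s` is upper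
semicontinuous on `Max R`. Put `k(s) = max_j (j + 1 + dim {g_s > j})`, so `k(∅) ≤ n + d`. For each
`j` and each irreducible component `C` of `{g_s > j}` pick a point of `C` where `g_s` is minimal.
By the Chinese remainder theorem there is one `c ∈ A` which, at each of these finitely many
points, is congruent to one of the missing generators; adding `c` lowers `g` there, and hence
lowers `k` by one. After `k(∅)` steps, `s` generates `A` modulo every maximal ideal, so `A` itself.
-/

section LevelDim

open TopologicalSpace

variable {X : Type*} [TopologicalSpace X]

-- `j + dim {x | j < g x} < k` for every `j`, dimension being measured by chains of irreducible
-- closed subsets.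
def LevelDimLT (g : X → ℕ) (k : ℕ) : Prop :=
  ∀ (j : ℕ) (l : LTSeries (IrreducibleCloseds X)), (l.last : Set X) ⊆ {x | j < g x} →
    j + l.length < k

theorem LevelDimLT.eq_zero {g : X → ℕ} (hg : IsClosed {x | 0 < g x}) (H : LevelDimLT g 0)
    (x : X) : g x = 0 := by
  by_contra hx
  let Y : IrreducibleCloseds X := ⟨closure {x}, isIrreducible_singleton.closure, isClosed_closure⟩
  have hY : (Y : Set X) ⊆ {x | 0 < g x} :=
    closure_minimal (Set.singleton_subset_iff.mpr (Nat.pos_of_ne_zero hx)) hg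
  exact Nat.not_lt_zero _ (H 0 (RelSeries.singleton _ Y) hY)

theorem levelDimLT_of_le {g : X → ℕ} {n d : ℕ} (hg : ∀ x, g x ≤ n)
    (hX : topologicalKrullDim X ≤ d) : LevelDimLT g (n + d) := by
  intro j l hl
  obtain ⟨x, hx⟩ := l.last.isIrreducible.nonempty
  have hj : j < n := (hl hx).trans_le (hg x)
  have hlen : (l.length : WithBot ℕ∞) ≤ d := (Order.LTSeries.length_le_krullDim l).trans hX
  have : l.length ≤ d := by exact_mod_cast hlen
  omega

theorem exists_finite_minimizers [NoetherianSpace X] {Z : Set X} (hZ : IsClosed Z) (g : X → ℕ) :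
    ∃ P : Set X, P.Finite ∧ ∀ Y : Set X, IsIrreducible Y → Y ⊆ Z →
      ∃ C : IrreducibleCloseds X, Y ⊆ C ∧ (C : Set X) ⊆ Z ∧
        ∃ x ∈ P, x ∈ C ∧ ∀ y ∈ C, g x ≤ g y := by
  obtain ⟨S, hSf, hSc, hSi, rfl⟩ := NoetherianSpace.exists_finite_set_isClosed_irreducible hZ
  choose m hmC hmin using fun C : S ↦
    (⟨Function.argminOn g C (hSi C C.2).nonempty, Function.argminOn_mem _ _ _,
      fun y hy ↦ Function.argminOn_le g C hy⟩ : ∃ x ∈ (C : Set X), ∀ y ∈ (C : Set X), g x ≤ g y)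
  have := hSf.to_subtype
  refine ⟨Set.range m, Set.finite_range m, fun Y hY hYZ ↦ ?_⟩
  lift S to Finset (Set X) using hSf
  obtain ⟨C, hCS, hYC⟩ := isIrreducible_iff_sUnion_isClosed.mp hY S hSc hYZ
  exact ⟨⟨C, hSi C hCS, hSc C hCS⟩, hYC, Set.subset_sUnion_of_mem hCS,
    m ⟨C, hCS⟩, Set.mem_range_self _, hmC ⟨C, hCS⟩, hmin ⟨C, hCS⟩⟩

theorem LevelDimLT.exists_finset [NoetherianSpace X] {g : X → ℕ} {k : ℕ}
    (hg : ∀ j, IsClosed {x | j < g x}) (H : LevelDimLT g (k + 1)) :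
    ∃ P : Finset X, ∀ g' : X → ℕ, g' ≤ g → (∀ x ∈ P, g' x ≤ g x - 1) → LevelDimLT g' k := by
  choose P hPf hP using fun j ↦ exists_finite_minimizers (hg j) g
  have hfin : (⋃ j ∈ Set.Iic k, P j).Finite := (Set.finite_Iic k).biUnion fun j _ ↦ hPf j
  refine ⟨hfin.toFinset, fun g' hg' hg'P j l hl ↦ ?_⟩
  have hl' : (l.last : Set X) ⊆ {x | j < g x} := fun x hx ↦ (hl hx).trans_le (hg' x)
  have hjk := H j l hl'
  obtain ⟨C, hYC, hCZ, x, hxP, hxC, hxmin⟩ := hP j _ l.last.isIrreducible hl'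
  rcases (show l.last ≤ C from hYC).lt_or_eq with hlt | rfl
  · have := H j (l.snoc C hlt) (by rwa [RelSeries.last_snoc])
    rw [RelSeries.snoc_length] at this
    omega
  · -- `g` is then `≥ j + 2` on all of `C`, so the same chain also lies in `{j + 1 < g}`
    have hxP' : x ∈ hfin.toFinset :=
      hfin.mem_toFinset.mpr (Set.mem_biUnion (Set.mem_Iic.mpr (by omega)) hxP)
    have hx : j + 1 < g x := by
      have := (hl hxC).trans_le (hg'P x hxP')
      omega
    have := H (j + 1) l fun y hy ↦ hx.trans_le (hxmin y hy)
    omega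

end LevelDim

section MaximalSpectrum

variable {R M : Type*} [CommRing R] [AddCommGroup M] [Module R M]

theorem Submodule.sup_smul_top_eq_top_iff_not_colon_le [Module.Finite R M] (N : Submodule R M)
    {p : Ideal R} (hp : p.IsMaximal) : N ⊔ p • ⊤ = ⊤ ↔ ¬ N.colon Set.univ ≤ p := by
  constructor
  · intro h
    have hQ : (⊤ : Submodule R (M ⧸ N)) ≤ p • ⊤ := by
      have := (N.map_mkQ_eq_top _).mpr h
      rw [Submodule.map_smul'', Submodule.map_top, N.range_mkQ] at this
      exact this.ge
    obtain ⟨r, hr1, hr⟩ := Submodule.exists_sub_one_mem_and_smul_eq_zero_of_fg_of_le_smul p ⊤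
      Module.Finite.fg_top hQ
    refine fun hle ↦ hp.ne_top ((Ideal.eq_top_iff_one p).mpr ?_)
    have hr : r ∈ N.colon Set.univ := Submodule.mem_colon.mpr fun x _ ↦
      (Submodule.Quotient.mk_eq_zero N).mp (hr (Submodule.Quotient.mk x) trivial)
    simpa using p.sub_mem (hle hr) hr1
  · intro h
    obtain ⟨a, ha, hap⟩ := SetLike.not_le_iff_exists.mp h
    obtain ⟨b, i, hi, hbi⟩ := hp.exists_inv hap
    refine eq_top_iff.mpr fun x _ ↦ ?_
    rw [← one_smul R x, ← hbi, add_smul, mul_smul]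
    exact Submodule.add_mem_sup (N.smul_mem b (Submodule.mem_colon.mp ha x trivial))
      (Submodule.smul_mem_smul hi trivial)

theorem Submodule.eq_top_of_forall_sup_smul_top_eq_top [Module.Finite R M] (N : Submodule R M)
    (h : ∀ p : Ideal R, p.IsMaximal → N ⊔ p • ⊤ = ⊤) : N = ⊤ := by
  by_contra hN
  have : N.colon Set.univ ≠ ⊤ := fun h ↦ hN (eq_top_iff.mpr fun x _ ↦
    (Submodule.colon_eq_top_iff_subset _).mp h trivial)
  obtain ⟨p, hp, hle⟩ := Ideal.exists_le_maximal _ this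
  exact (N.sup_smul_top_eq_top_iff_not_colon_le hp).mp (h p hp) hle

theorem Submodule.isClosed_setOf_sup_smul_top_ne_top [Module.Finite R M] (N : Submodule R M) :
    IsClosed {p : MaximalSpectrum R | N ⊔ p.asIdeal • ⊤ ≠ ⊤} := by
  have : {p : MaximalSpectrum R | N ⊔ p.asIdeal • ⊤ ≠ ⊤} = MaximalSpectrum.toPrimeSpectrum ⁻¹'
      PrimeSpectrum.zeroLocus (N.colon Set.univ) :=
    Set.ext fun p ↦ (N.sup_smul_top_eq_top_iff_not_colon_le p.isMaximal).not.trans not_not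
  rw [this]
  exact (PrimeSpectrum.isClosed_zeroLocus _).preimage MaximalSpectrum.toPrimeSpectrum_continuous

instance MaximalSpectrum.noetherianSpace [IsNoetherianRing R] :
    TopologicalSpace.NoetherianSpace (MaximalSpectrum R) :=
  Topology.IsInducing.noetherianSpace (i := MaximalSpectrum.toPrimeSpectrum) ⟨rfl⟩

theorem MaximalSpectrum.exists_sub_mem_smul_top (P : Finset (MaximalSpectrum R))
    (a : MaximalSpectrum R → M) : ∃ c : M, ∀ p ∈ P, c - a p ∈ p.asIdeal • (⊤ : Submodule R M) := by
  obtain ⟨c, hc⟩ := Ideal.pi_tensorProductMk_quotient_surjective M (fun p : P ↦ p.1.asIdeal)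
    (fun p q hpq ↦ Ideal.isCoprime_of_isMaximal fun h ↦ hpq (Subtype.ext (MaximalSpectrum.ext h)))
    (fun p ↦ 1 ⊗ₜ a p)
  refine ⟨c, fun p hp ↦ ?_⟩
  have := congrArg (quotTensorEquivQuotSMul M p.asIdeal) (congrFun hc ⟨p, hp⟩)
  rwa [LinearMap.pi_apply, mk_apply, ← map_one (Ideal.Quotient.mk p.asIdeal),
    quotTensorEquivQuotSMul_mk_tmul, quotTensorEquivQuotSMul_mk_tmul, one_smul, one_smul,
    Submodule.Quotient.eq] at this

end MaximalSpectrum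

section Fiber

variable {R M : Type*} [CommRing R] [AddCommGroup M] [Module R M] (p : Ideal R) [p.IsMaximal]

theorem Ideal.algebraMap_fractionRing_quotient_bijective :
    Function.Bijective (algebraMap (R ⧸ p) (FractionRing (R ⧸ p))) :=
  ⟨IsFractionRing.injective _ _, IsFractionRing.surjective_iff_isField.mpr
    ((Ideal.Quotient.maximal_ideal_iff_isField_quotient p).mp ‹_›)⟩

noncomputable def Ideal.quotientAlgEquivFractionRing : (R ⧸ p) ≃ₐ[R] FractionRing (R ⧸ p) :=
  AlgEquiv.ofBijective (IsScalarTower.toAlgHom R (R ⧸ p) _)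
    p.algebraMap_fractionRing_quotient_bijective

noncomputable def Ideal.fractionRingQuotientTensorEquiv :
    FractionRing (R ⧸ p) ⊗[R] M ≃ₗ[R] M ⧸ (p • ⊤ : Submodule R M) :=
  p.quotientAlgEquivFractionRing.symm.toLinearEquiv.rTensor M ≪≫ₗ quotTensorEquivQuotSMul M p

theorem Ideal.fractionRingQuotientTensorEquiv_one_tmul (x : M) :
    p.fractionRingQuotientTensorEquiv (1 ⊗ₜ x) = Submodule.Quotient.mk x := by
  rw [fractionRingQuotientTensorEquiv, LinearEquiv.trans_apply, LinearEquiv.rTensor_tmul,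
    AlgEquiv.toLinearEquiv_apply, map_one, ← map_one (Ideal.Quotient.mk p),
    quotTensorEquivQuotSMul_mk_tmul, one_smul]

theorem Ideal.fractionRingQuotientTensorEquiv_comp_mk :
    p.fractionRingQuotientTensorEquiv.toLinearMap ∘ₗ
      TensorProduct.mk R (FractionRing (R ⧸ p)) M 1 = (p • ⊤ : Submodule R M).mkQ :=
  LinearMap.ext p.fractionRingQuotientTensorEquiv_one_tmul

theorem Ideal.algebraMap_fractionRing_quotient_surjective :
    Function.Surjective (algebraMap R (FractionRing (R ⧸ p))) := by
  rw [IsScalarTower.algebraMap_eq R (R ⧸ p)]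
  exact p.algebraMap_fractionRing_quotient_bijective.2.comp Ideal.Quotient.mk_surjective

theorem Ideal.tensorProductMk_fractionRing_quotient_surjective :
    Function.Surjective (TensorProduct.mk R (FractionRing (R ⧸ p)) M 1) := by
  refine Function.Surjective.of_comp_left (f := p.fractionRingQuotientTensorEquiv) ?_
    p.fractionRingQuotientTensorEquiv.injective
  rw [← LinearEquiv.coe_toLinearMap, ← LinearMap.coe_comp,
    p.fractionRingQuotientTensorEquiv_comp_mk]
  exact Submodule.mkQ_surjective _

theorem Submodule.map_tensorProductMk_fractionRing_quotient_eq_top_iff (N : Submodule R M) :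
    N.map (TensorProduct.mk R (FractionRing (R ⧸ p)) M 1) = ⊤ ↔ N ⊔ p • ⊤ = ⊤ := by
  rw [sup_comm, ← Submodule.map_mkQ_eq_top, ← p.fractionRingQuotientTensorEquiv_comp_mk,
    Submodule.map_comp, Submodule.map_eq_top_iff]

end Fiber

section NonUnitalAlgebra

variable {R A : Type*} [CommRing R] [NonUnitalNonAssocRing A] [Module R A]
  [IsScalarTower R A A] [SMulCommClass R A A]

open NonUnitalAlgebra

theorem generatesAsNonUnitalAlgebra_iff_adjoin_eq_top {s : Set A} :
    GeneratesAsNonUnitalAlgebra R s ↔ adjoin R s = ⊤ := by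
  refine ⟨fun h ↦ ?_, fun h B hsB hB ↦ ?_⟩
  · exact toSubmodule_eq_top.mp
      (h _ (subset_adjoin R) fun _ hx _ hy ↦ (adjoin R s).mul_mem hx hy)
  · let S : NonUnitalSubalgebra R A := { B with mul_mem' := fun hx hy ↦ hB _ hx _ hy }
    exact eq_top_iff.mpr fun x _ ↦ adjoin_le (S := S) hsB (h ▸ trivial : x ∈ adjoin R s)

theorem NonUnitalSubalgebra.mul_mem_sup_smul_top (S : NonUnitalSubalgebra R A) (I : Ideal R)
    {x y : A} (hx : x ∈ S.toSubmodule ⊔ I • ⊤) (hy : y ∈ S.toSubmodule ⊔ I • ⊤) :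
    x * y ∈ S.toSubmodule ⊔ I • ⊤ := by
  have hI : ∀ z ∈ I • (⊤ : Submodule R A), ∀ w : A,
      z * w ∈ I • (⊤ : Submodule R A) ∧ w * z ∈ I • (⊤ : Submodule R A) := by
    intro z hz w
    refine Submodule.smul_induction_on hz (fun r hr m _ ↦ ?_) fun z z' h h' ↦ ?_
    · rw [smul_mul_assoc, mul_smul_comm]
      exact ⟨Submodule.smul_mem_smul hr trivial, Submodule.smul_mem_smul hr trivial⟩
    · rw [add_mul, mul_add]
      exact ⟨add_mem h.1 h'.1, add_mem h.2 h'.2⟩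
  obtain ⟨b, hb, z, hz, rfl⟩ := Submodule.mem_sup.mp hx
  obtain ⟨b', hb', z', hz', rfl⟩ := Submodule.mem_sup.mp hy
  rw [add_mul, mul_add, mul_add]
  exact add_mem (add_mem (Submodule.mem_sup_left (S.mul_mem hb hb'))
    (Submodule.mem_sup_right (hI z' hz' b).2))
    (Submodule.mem_sup_right (add_mem (hI z hz b').1 (hI z hz z').1))

def GeneratesModulo (I : Ideal R) (s : Set A) : Prop :=
  (adjoin R s).toSubmodule ⊔ I • ⊤ = ⊤

theorem GeneratesModulo.mono {I : Ideal R} {s s' : Set A} (h : GeneratesModulo I s)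
    (hs : s ⊆ s') : GeneratesModulo I s' :=
  top_unique (h.symm.trans_le (sup_le_sup_right (adjoin_mono hs) _))

theorem GeneratesModulo.insert_union_erase [DecidableEq A] {I : Ideal R} {s t : Finset A}
    {a c : A} (hc : c - a ∈ I • (⊤ : Submodule R A)) (h : GeneratesModulo I (↑(s ∪ t) : Set A)) :
    GeneratesModulo I (↑(insert c s ∪ t.erase a) : Set A) := by
  set N := (adjoin R (↑(insert c s ∪ t.erase a) : Set A)).toSubmodule ⊔ I • ⊤
  let S : NonUnitalSubalgebra R A :=
    { N with mul_mem' := fun hx hy ↦ NonUnitalSubalgebra.mul_mem_sup_smul_top _ _ hx hy }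
  have hN : ∀ x ∈ insert c s ∪ t.erase a, x ∈ N := fun x hx ↦
    Submodule.mem_sup_left (subset_adjoin R (Finset.mem_coe.mpr hx))
  have hst : (↑(s ∪ t) : Set A) ⊆ S := by
    intro x hx
    rcases Finset.mem_union.mp hx with hx | hx
    · exact hN x (by simp [hx])
    · by_cases hxa : x = a
      · rw [hxa, ← sub_sub_cancel c a]
        exact sub_mem (hN c (by simp)) (Submodule.mem_sup_right hc)
      · exact hN x (by simp [hx, hxa])
  exact top_unique (h.symm.trans_le (sup_le (adjoin_le (S := S) hst) le_sup_right))

theorem generatesModulo_of_generates_fiber (p : Ideal R) [p.IsMaximal] {s : Set A}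
    {u : Set (FractionRing (R ⧸ p) ⊗[R] A)}
    (hu : GeneratesAsNonUnitalAlgebra (FractionRing (R ⧸ p)) u)
    (hus : u ⊆ TensorProduct.mk R (FractionRing (R ⧸ p)) A 1 '' s) :
    GeneratesModulo p s := by
  set φ := TensorProduct.mk R (FractionRing (R ⧸ p)) A 1
  have hφ : ∀ x y, φ (x * y) = φ x * φ y := fun x y ↦ by
    simp [φ, Algebra.TensorProduct.tmul_mul_tmul]
  set W := Submodule.span (FractionRing (R ⧸ p)) (φ '' adjoin R s)
  -- every `R(p)`-submodule is an `R`-submodule, as `R → R(p)` is onto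
  have hW : W.restrictScalars R = (adjoin R s).toSubmodule.map φ := by
    rw [Submodule.restrictScalars_span R _ p.algebraMap_fractionRing_quotient_surjective]
    exact (Submodule.map φ (adjoin R s).toSubmodule).span_eq
  have hWmul : ∀ x ∈ W, ∀ y ∈ W, x * y ∈ W := by
    intro x hx y hy
    obtain ⟨a, ha, rfl⟩ : x ∈ (adjoin R s).toSubmodule.map φ := hW ▸ hx
    obtain ⟨b, hb, rfl⟩ : y ∈ (adjoin R s).toSubmodule.map φ := hW ▸ hy
    rw [← hφ]
    exact Submodule.subset_span ⟨a * b, mul_mem ha hb, rfl⟩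
  have hWtop := hu W (hus.trans ((Set.image_mono (subset_adjoin R)).trans Submodule.subset_span))
    hWmul
  rw [GeneratesModulo, ← Submodule.map_tensorProductMk_fractionRing_quotient_eq_top_iff, ← hW,
    hWtop, Submodule.restrictScalars_top]

theorem adjoin_eq_top_of_forall_generatesModulo [Module.Finite R A] {s : Set A}
    (h : ∀ p : Ideal R, p.IsMaximal → GeneratesModulo p s) : adjoin R s = ⊤ :=
  toSubmodule_eq_top.mp (Submodule.eq_top_of_forall_sup_smul_top_eq_top _ h)

end NonUnitalAlgebra

section MissingGenerators

variable {R A : Type*} [CommRing R] [NonUnitalNonAssocRing A] [Module R A]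
  [IsScalarTower R A A] [SMulCommClass R A A] [DecidableEq A]

-- `g_s(p)` above: the number of generators of the fibre `A(p) ≅ A / p A` missing from `s`.
noncomputable def missingGenerators (s : Finset A) (p : Ideal R) : ℕ :=
  sInf {j | ∃ t : Finset A, t.card ≤ j ∧ GeneratesModulo p (↑(s ∪ t) : Set A)}

variable [Module.Finite R A]

theorem missingGenerators_le_iff {s : Finset A} {p : Ideal R} {j : ℕ} :
    missingGenerators s p ≤ j ↔
      ∃ t : Finset A, t.card ≤ j ∧ GeneratesModulo p (↑(s ∪ t) : Set A) := by
  obtain ⟨t₀, ht₀⟩ := Module.Finite.fg_top (R := R) (M := A)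
  have ht₀ : GeneratesModulo p (↑(s ∪ t₀) : Set A) := by
    refine top_unique (le_sup_of_le_left (ht₀ ▸ Submodule.span_le.mpr ?_))
    exact (Finset.coe_subset.mpr Finset.subset_union_right).trans (NonUnitalAlgebra.subset_adjoin R)
  refine ⟨fun h ↦ ?_, fun ⟨t, ht, H⟩ ↦ Nat.sInf_le ⟨t, ht, H⟩⟩
  obtain ⟨t, ht, H⟩ := Nat.sInf_mem
    (s := {j | ∃ t : Finset A, t.card ≤ j ∧ GeneratesModulo p (↑(s ∪ t) : Set A)})
    ⟨t₀.card, t₀, le_rfl, ht₀⟩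
  exact ⟨t, ht.trans h, H⟩

theorem missingGenerators_anti {s s' : Finset A} (hs : s ⊆ s') (p : Ideal R) :
    missingGenerators s' p ≤ missingGenerators s p := by
  obtain ⟨t, ht, H⟩ := missingGenerators_le_iff.mp (le_refl (missingGenerators s p))
  exact missingGenerators_le_iff.mpr
    ⟨t, ht, H.mono (Finset.coe_subset.mpr (Finset.union_subset_union hs subset_rfl))⟩

theorem isClosed_setOf_lt_missingGenerators (s : Finset A) (j : ℕ) :
    IsClosed {p : MaximalSpectrum R | j < missingGenerators s p.asIdeal} := by
  have : {p : MaximalSpectrum R | j < missingGenerators s p.asIdeal} =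
      ⋂ (t : Finset A) (_ : t.card ≤ j), {p | ¬ GeneratesModulo p.asIdeal (↑(s ∪ t) : Set A)} := by
    ext p
    simp only [Set.mem_ofPred_eq, Set.mem_iInter, ← not_le, missingGenerators_le_iff, not_exists,
      not_and]
  rw [this]
  exact isClosed_biInter fun t _ ↦ Submodule.isClosed_setOf_sup_smul_top_ne_top _

theorem missingGenerators_le_card_of_generates (s : Finset A) (p : Ideal R) [p.IsMaximal]
    {u : Finset (FractionRing (R ⧸ p) ⊗[R] A)}
    (hu : GeneratesAsNonUnitalAlgebra (FractionRing (R ⧸ p))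
      (u : Set (FractionRing (R ⧸ p) ⊗[R] A))) :
    missingGenerators s p ≤ u.card := by
  choose lift hlift using p.tensorProductMk_fractionRing_quotient_surjective (M := A)
  refine missingGenerators_le_iff.mpr ⟨u.image lift, Finset.card_image_le,
    generatesModulo_of_generates_fiber (u := ↑u) p hu fun z hz ↦ ⟨lift z, ?_, hlift z⟩⟩
  simpa using Or.inr ⟨z, hz, rfl⟩

theorem exists_missingGenerators_insert_le_of_sub_mem (s : Finset A) (p : Ideal R) :
    ∃ a : A, ∀ c : A, c - a ∈ p • (⊤ : Submodule R A) →
      missingGenerators (insert c s) p ≤ missingGenerators s p - 1 := by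
  obtain ⟨t, ht, H⟩ := missingGenerators_le_iff.mp (le_refl (missingGenerators s p))
  rcases t.eq_empty_or_nonempty with rfl | ⟨a, ha⟩
  · refine ⟨0, fun c _ ↦ ?_⟩
    have h0 : missingGenerators s p ≤ 0 := missingGenerators_le_iff.mpr ⟨∅, le_rfl, H⟩
    have := missingGenerators_anti (Finset.subset_insert c s) p
    omega
  · refine ⟨a, fun c hc ↦ missingGenerators_le_iff.mpr ⟨t.erase a, ?_, H.insert_union_erase hc⟩⟩
    rw [Finset.card_erase_of_mem ha]
    omega

theorem exists_missingGenerators_insert_le (P : Finset (MaximalSpectrum R)) (s : Finset A) :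
    ∃ c : A, ∀ p ∈ P,
      missingGenerators (insert c s) p.asIdeal ≤ missingGenerators s p.asIdeal - 1 := by
  choose a ha using fun p : MaximalSpectrum R ↦
    exists_missingGenerators_insert_le_of_sub_mem s p.asIdeal
  obtain ⟨c, hc⟩ := MaximalSpectrum.exists_sub_mem_smul_top P a
  exact ⟨c, fun p hp ↦ ha p c (hc p hp)⟩

theorem generatesModulo_of_missingGenerators_eq_zero {s : Finset A} {p : Ideal R}
    (h : missingGenerators s p = 0) : GeneratesModulo p (s : Set A) := by
  obtain ⟨t, ht, H⟩ := missingGenerators_le_iff.mp h.le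
  rwa [Finset.card_eq_zero.mp (Nat.le_zero.mp ht), Finset.union_empty] at H

theorem exists_card_le_forall_missingGenerators_eq_zero [IsNoetherianRing R] (k : ℕ)
    (s : Finset A)
    (H : LevelDimLT (fun p : MaximalSpectrum R ↦ missingGenerators s p.asIdeal) k) :
    ∃ s' : Finset A, s'.card ≤ s.card + k ∧
      ∀ p : MaximalSpectrum R, missingGenerators s' p.asIdeal = 0 := by
  induction k generalizing s with
  | zero => exact ⟨s, le_rfl, H.eq_zero (isClosed_setOf_lt_missingGenerators s 0)⟩
  | succ k ih =>
    obtain ⟨P, hP⟩ := H.exists_finset (isClosed_setOf_lt_missingGenerators s)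
    obtain ⟨c, hc⟩ := exists_missingGenerators_insert_le P s
    obtain ⟨s', hs', h0⟩ := ih (insert c s)
      (hP _ (fun p ↦ missingGenerators_anti (Finset.subset_insert c s) _) hc)
    exact ⟨s', hs'.trans (by have := Finset.card_insert_le c s; omega), h0⟩

end MissingGenerators

/-- Main theorem: if dim Max R = d and the finite (not necessarily unital, commutative or
associative) R-algebra A is such that A(p) is generated by n elements as a non-unital
R(p)-algebra for every maximal ideal p, then A is generated by n + d elements. -/
theorem main_theorem (R : Type) [CommRing R] [IsNoetherianRing R] (d n : ℕ)
    (hd : topologicalKrullDim (MaximalSpectrum R) = d)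
    (A : Type) [NonUnitalNonAssocRing A] [Module R A]
    [SMulCommClass R A A] [IsScalarTower R A A] [Module.Finite R A]
    (h : ∀ (p : Ideal R), p.IsMaximal →
      ∃ s : Finset (FractionRing (R ⧸ p) ⊗[R] A), s.card ≤ n ∧
        GeneratesAsNonUnitalAlgebra (FractionRing (R ⧸ p))
          (s : Set (FractionRing (R ⧸ p) ⊗[R] A))) :
    ∃ s : Finset A, s.card ≤ n + d ∧ GeneratesAsNonUnitalAlgebra R (s : Set A) := by
  classical
  have hbound (p : MaximalSpectrum R) : missingGenerators (∅ : Finset A) p.asIdeal ≤ n := by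
    obtain ⟨u, hu, hgen⟩ := h p.asIdeal p.isMaximal
    exact (missingGenerators_le_card_of_generates ∅ p.asIdeal hgen).trans hu
  obtain ⟨s, hs, h0⟩ := exists_card_le_forall_missingGenerators_eq_zero (n + d) ∅
    (levelDimLT_of_le hbound hd.le)
  refine ⟨s, by simpa using hs, generatesAsNonUnitalAlgebra_iff_adjoin_eq_top.mpr ?_⟩
  exact adjoin_eq_top_of_forall_generatesModulo fun p hp ↦
    generatesModulo_of_missingGenerators_eq_zero (h0 ⟨p, hp⟩)
end

section
/- Let R be a commutative Noetherian ring with 1, let A be a finite R-algebra (finitely generated as an R-module, with R-bilinear multiplication), and let a_1, ..., a_n ∈ A. If for some prime p of R the images a_1(p), ..., a_n(p) generate A(p) := A ⊗_R R(p) as a non-unital R(p)-algebra, then there is an open neighborhood U of p in Spec R such that for every q ∈ U, the images a_1(q), ..., a_n(q) generate A(q) as a non-unital R(q)-algebra. -/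
/-!
Let `N ⊆ A` be the `R`-submodule underlying the non-unital subalgebra generated by the `aᵢ`.
Forming generated subalgebras commutes with base change, so the `aᵢ(q)` generate `A(q)` iff the
base change of `N` to `κ(q)` is everything, which by right exactness of `κ(q) ⊗ -` means
`κ(q) ⊗ (A / N) = 0`. As `A / N` is a finite module, Nakayama's lemma says this happens exactly
when `q` lies outside the support of `A / N`, and that support is closed.
-/

open TensorProduct

theorem generatesAsNonUnitalAlgebra_iff_adjoin_toSubmodule_eq_top {R A : Type*}
    [CommSemiring R] [NonUnitalNonAssocSemiring A] [Module R A] [IsScalarTower R A A]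
    [SMulCommClass R A A] {s : Set A} :
    GeneratesAsNonUnitalAlgebra R s ↔ (NonUnitalAlgebra.adjoin R s).toSubmodule = ⊤ := by
  refine ⟨fun h ↦ h _ (NonUnitalAlgebra.subset_adjoin R)
      fun _ hx _ hy ↦ (NonUnitalAlgebra.adjoin R s).mul_mem hx hy,
    fun h B hsB hmulB ↦ eq_top_iff.mpr (h ▸ ?_)⟩
  exact NonUnitalAlgebra.adjoin_le (S := B.toNonUnitalSubalgebra fun x y hx ↦ hmulB x hx y) hsB

theorem Submodule.baseChange_eq_top_iff_subsingleton {R M : Type*} (K : Type*) [CommRing R]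
    [AddCommGroup M] [Module R M] [Ring K] [Algebra R K] (p : Submodule R M) :
    p.baseChange K = ⊤ ↔ Subsingleton (K ⊗[R] (M ⧸ p)) := by
  have hmem (x : K ⊗[R] M) : x ∈ p.baseChange K ↔ p.mkQ.lTensor K x = 0 := by
    rw [← LinearMap.mem_ker, lTensor_mkQ]
    rfl
  rw [Submodule.eq_top_iff']
  simp only [hmem]
  refine ⟨fun h ↦ ⟨fun y z ↦ ?_⟩, fun _ x ↦ Subsingleton.elim _ _⟩
  obtain ⟨y, rfl⟩ := LinearMap.lTensor_surjective K p.mkQ_surjective y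
  obtain ⟨z, rfl⟩ := LinearMap.lTensor_surjective K p.mkQ_surjective z
  rw [h y, h z]

section BaseChange

variable {R A : Type*} (K : Type*) [CommRing R] [NonUnitalNonAssocRing A] [Module R A]
  [IsScalarTower R A A] [SMulCommClass R A A] [CommRing K] [Algebra R K]

namespace NonUnitalSubalgebra

theorem mul_mem_baseChange (S : NonUnitalSubalgebra R A) {x y : K ⊗[R] A}
    (hx : x ∈ S.toSubmodule.baseChange K) (hy : y ∈ S.toSubmodule.baseChange K) :
    x * y ∈ S.toSubmodule.baseChange K := by
  obtain ⟨x, rfl⟩ := hx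
  obtain ⟨y, rfl⟩ := hy
  induction x using TensorProduct.induction_on with
  | zero => simp
  | add x x' hx hx' => simpa [add_mul] using add_mem hx hx'
  | tmul k a =>
    induction y using TensorProduct.induction_on with
    | zero => simp
    | add y y' hy hy' => simpa [mul_add] using add_mem hy hy'
    | tmul k' b => simpa using Submodule.tmul_mem_baseChange_of_mem (k * k') (S.mul_mem a.2 b.2)

def baseChange (S : NonUnitalSubalgebra R A) : NonUnitalSubalgebra K (K ⊗[R] A) :=
  (S.toSubmodule.baseChange K).toNonUnitalSubalgebra fun _ _ ↦ S.mul_mem_baseChange K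

end NonUnitalSubalgebra

theorem NonUnitalAlgebra.adjoin_tmul_eq_baseChange (s : Set A) :
    adjoin K (TensorProduct.mk R K A 1 '' s) = (adjoin R s).baseChange K := by
  refine le_antisymm (adjoin_le ?_) fun x hx ↦ ?_
  · rintro _ ⟨a, ha, rfl⟩
    exact Submodule.tmul_mem_baseChange_of_mem 1 (subset_adjoin R ha)
  change x ∈ (adjoin R s).toSubmodule.baseChange K at hx
  rw [Submodule.baseChange_eq_span] at hx
  refine (Submodule.span_le (p := (adjoin K _).toSubmodule)).mpr ?_ hx
  rintro _ ⟨a, ha, rfl⟩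
  induction ha using adjoin_induction with
  | mem a ha => exact subset_adjoin K ⟨a, ha, rfl⟩
  | add a b _ _ ha hb => simpa [tmul_add] using add_mem ha hb
  | zero => simp
  | mul a b _ _ ha hb => simpa using (adjoin K _).mul_mem ha hb
  | smul r a _ ha =>
    rw [mk_apply, tmul_smul, ← algebraMap_smul K]
    exact Submodule.smul_mem _ _ ha

theorem generatesAsNonUnitalAlgebra_range_tmul_iff {ι : Type*} (a : ι → A) :
    GeneratesAsNonUnitalAlgebra K (Set.range fun i ↦ (1 : K) ⊗ₜ[R] a i) ↔
      Subsingleton (K ⊗[R] (A ⧸ (NonUnitalAlgebra.adjoin R (Set.range a)).toSubmodule)) := by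
  rw [← Submodule.baseChange_eq_top_iff_subsingleton,
    generatesAsNonUnitalAlgebra_iff_adjoin_toSubmodule_eq_top,
    show (fun i ↦ (1 : K) ⊗ₜ[R] a i) = mk R K A 1 ∘ a from rfl, Set.range_comp,
    NonUnitalAlgebra.adjoin_tmul_eq_baseChange]
  rfl

end BaseChange

theorem Module.mem_support_iff_nontrivial_fractionRing_tensorProduct {R M : Type*} [CommRing R]
    [AddCommGroup M] [Module R M] [Module.Finite R M] (p : PrimeSpectrum R) :
    p ∈ Module.support R M ↔ Nontrivial (FractionRing (R ⧸ p.asIdeal) ⊗[R] M) := by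
  let e : FractionRing (R ⧸ p.asIdeal) ≃ₐ[R] p.asIdeal.ResidueField :=
    (IsLocalization.algEquiv (nonZeroDivisors (R ⧸ p.asIdeal)) _ _).restrictScalars R
  rw [Module.mem_support_iff_nontrivial_residueField_tensorProduct]
  exact (TensorProduct.congr e.toLinearEquiv (LinearEquiv.refl R M)).nontrivial_congr.symm

theorem generation_is_open_general (R : Type) [CommRing R]
    (A : Type) [NonUnitalNonAssocRing A] [Module R A]
    [SMulCommClass R A A] [IsScalarTower R A A] [Module.Finite R A]
    (n : ℕ) (a : Fin n → A) (p : Ideal R) (hp : p.IsPrime)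
    (h : GeneratesAsNonUnitalAlgebra (FractionRing (R ⧸ p))
      (Set.range fun i => ((1 : FractionRing (R ⧸ p)) ⊗ₜ[R] a i))) :
    ∃ U : Set (PrimeSpectrum R), IsOpen U ∧ (⟨p, hp⟩ : PrimeSpectrum R) ∈ U ∧
      ∀ q ∈ U, GeneratesAsNonUnitalAlgebra (FractionRing (R ⧸ q.asIdeal))
        (Set.range fun i => ((1 : FractionRing (R ⧸ q.asIdeal)) ⊗ₜ[R] a i)) := by
  have hgen (q : PrimeSpectrum R) :
      GeneratesAsNonUnitalAlgebra (FractionRing (R ⧸ q.asIdeal))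
          (Set.range fun i => ((1 : FractionRing (R ⧸ q.asIdeal)) ⊗ₜ[R] a i)) ↔
        q ∉ Module.support R (A ⧸ (NonUnitalAlgebra.adjoin R (Set.range a)).toSubmodule) := by
    rw [generatesAsNonUnitalAlgebra_range_tmul_iff,
      Module.mem_support_iff_nontrivial_fractionRing_tensorProduct, not_nontrivial_iff_subsingleton]
  exact ⟨_, Module.isClosed_support.isOpen_compl, (hgen ⟨p, hp⟩).mp h, fun q hq ↦ (hgen q).mpr hq⟩

/-- Lemma 2.2: generation of A(p) by the images of a₁, ..., aₙ is an open condition on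
p ∈ Spec R. -/
theorem generation_is_open (R : Type) [CommRing R] [IsNoetherianRing R]
    (A : Type) [NonUnitalNonAssocRing A] [Module R A]
    [SMulCommClass R A A] [IsScalarTower R A A] [Module.Finite R A]
    (n : ℕ) (a : Fin n → A) (p : Ideal R) (hp : p.IsPrime)
    (h : GeneratesAsNonUnitalAlgebra (FractionRing (R ⧸ p))
      (Set.range fun i => ((1 : FractionRing (R ⧸ p)) ⊗ₜ[R] a i))) :
    ∃ U : Set (PrimeSpectrum R), IsOpen U ∧ (⟨p, hp⟩ : PrimeSpectrum R) ∈ U ∧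
      ∀ q ∈ U, GeneratesAsNonUnitalAlgebra (FractionRing (R ⧸ q.asIdeal))
        (Set.range fun i => ((1 : FractionRing (R ⧸ q.asIdeal)) ⊗ₜ[R] a i)) :=
  generation_is_open_general R A n a p hp h
end

section
/- Let A and B be finite-dimensional (not necessarily unital, associative, or commutative) algebras over an infinite field F, and suppose A is a form of B, i.e., there exists a field extension K/F with A ⊗_F K ≅ B ⊗_F K as K-algebras. If B can be generated by n elements as an F-algebra, then A can be generated by n elements as an F-algebra. -/
open TensorProduct

section Words

variable {R A A' ι : Type*} [CommSemiring R] [NonUnitalNonAssocSemiring A] [Module R A]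
  [NonUnitalNonAssocSemiring A'] [Module R A']

variable (R) in
def wordSpan (v : ι → A) : Submodule R A :=
  Submodule.span R (Set.range (FreeMagma.lift v))

theorem FreeMagma.lift_comp {α β G : Type*} [Mul α] [Mul β] [FunLike G α β]
    [MulHomClass G α β] (f : G) (v : ι → α) (w : FreeMagma ι) :
    lift (f ∘ v) w = f (lift v w) := by
  induction w with
  | ih1 j => rfl
  | ih2 w₁ w₂ ih₁ ih₂ => simp only [map_mul, ih₁, ih₂]

theorem wordSpan_comp (f : A →ₙₐ[R] A') (v : ι → A) :
    wordSpan R (f ∘ v) = (wordSpan R v).map (f : A →ₗ[R] A') := by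
  rw [wordSpan, wordSpan, Submodule.map_span, ← Set.range_comp]
  exact congrArg _ (congrArg Set.range (funext (FreeMagma.lift_comp f v)))

theorem wordSpan_comp_eq_top {f : A →ₙₐ[R] A'} (hf : Function.Surjective f) {v : ι → A}
    (hv : wordSpan R v = ⊤) : wordSpan R (f ∘ v) = ⊤ := by
  rw [wordSpan_comp, hv, Submodule.map_top, LinearMap.range_eq_top]
  exact hf

variable [SMulCommClass R A A] [IsScalarTower R A A]

theorem mul_mem_wordSpan (v : ι → A) {x y : A} (hx : x ∈ wordSpan R v)
    (hy : y ∈ wordSpan R v) : x * y ∈ wordSpan R v := by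
  induction hx using Submodule.span_induction with
  | mem x hx =>
    induction hy using Submodule.span_induction with
    | mem y hy =>
      obtain ⟨w₁, rfl⟩ := hx
      obtain ⟨w₂, rfl⟩ := hy
      exact Submodule.subset_span ⟨w₁ * w₂, map_mul _ _ _⟩
    | zero => simp
    | add a b _ _ iha ihb => rw [mul_add]; exact add_mem iha ihb
    | smul r a _ ih => rw [mul_smul_comm]; exact Submodule.smul_mem _ _ ih
  | zero => simp
  | add a b _ _ iha ihb => rw [add_mul]; exact add_mem iha ihb
  | smul r a _ ih => rw [smul_mul_assoc]; exact Submodule.smul_mem _ _ ih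

theorem generatesAsNonUnitalAlgebra_range_iff (v : ι → A) :
    GeneratesAsNonUnitalAlgebra R (Set.range v) ↔ wordSpan R v = ⊤ := by
  refine ⟨fun h => h _ ?_ fun x hx y hy => mul_mem_wordSpan v hx hy, fun h M hv hM => ?_⟩
  · rintro _ ⟨j, rfl⟩
    exact Submodule.subset_span ⟨.of j, rfl⟩
  · rw [eq_top_iff, ← h, wordSpan, Submodule.span_le]
    rintro _ ⟨w, rfl⟩
    induction w with
    | ih1 j => exact hv ⟨j, rfl⟩
    | ih2 w₁ w₂ ih₁ ih₂ => rw [map_mul]; exact hM _ ih₁ _ ih₂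

end Words

section WordSpanBaseChange

variable {F K B ι : Type*} [CommSemiring F] [CommSemiring K] [Algebra F K]
  [NonUnitalNonAssocSemiring B] [Module F B] [SMulCommClass F B B] [IsScalarTower F B B]

variable (F K B) in
def TensorProduct.includeRightMulHom : B →ₙ* K ⊗[F] B where
  toFun b := 1 ⊗ₜ b
  map_mul' x y := by rw [Algebra.TensorProduct.tmul_mul_tmul, one_mul]

theorem wordSpan_baseChange (v : ι → B) :
    wordSpan K (fun j => (1 : K) ⊗ₜ[F] v j) = (wordSpan F v).baseChange K := by
  rw [wordSpan, wordSpan, Submodule.baseChange_span, ← Set.range_comp]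
  exact congrArg _ (congrArg Set.range (funext (FreeMagma.lift_comp (includeRightMulHom F K B) v)))

end WordSpanBaseChange

section WordPoly

open MvPolynomial

variable {R S ι κ : Type*} [CommSemiring R] [CommSemiring S] [Fintype κ]

/-- `wordPoly c w i` is the `i`-th coordinate of the word `w` evaluated, in the algebra with
structure constants `c`, at the generic tuple whose `j`-th entry has coordinates `X (j, ·)`. -/
noncomputable def wordPoly (c : κ → κ → κ → R) : FreeMagma ι → κ → MvPolynomial (ι × κ) R
  | .of j, i => X (j, i)
  | .mul w₁ w₂, i => ∑ k, ∑ l, C (c k l i) * wordPoly c w₁ k * wordPoly c w₂ l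

theorem wordPoly_mul (c : κ → κ → κ → R) (w₁ w₂ : FreeMagma ι) (i : κ) :
    wordPoly c (w₁ * w₂) i = ∑ k, ∑ l, C (c k l i) * wordPoly c w₁ k * wordPoly c w₂ l :=
  rfl

theorem map_wordPoly (f : R →+* S) (c : κ → κ → κ → R) (w : FreeMagma ι) (i : κ) :
    map f (wordPoly c w i) = wordPoly (fun k l i => f (c k l i)) w i := by
  induction w generalizing i with
  | ih1 j => simp [wordPoly]
  | ih2 w₁ w₂ ih₁ ih₂ => simp [wordPoly_mul, ih₁, ih₂]

variable {A : Type*} [NonUnitalNonAssocSemiring A] [Module R A]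
  [SMulCommClass R A A] [IsScalarTower R A A]

noncomputable def Module.Basis.structConst (b : Module.Basis κ R A) (k l i : κ) : R :=
  b.repr (b k * b l) i

theorem Module.Basis.repr_mul (b : Module.Basis κ R A) (x y : A) (i : κ) :
    b.repr (x * y) i = ∑ k, ∑ l, b.repr x k * b.repr y l * b.structConst k l i := by
  conv_lhs => rw [← b.sum_repr x, ← b.sum_repr y]
  simp only [Finset.sum_mul, Finset.mul_sum, smul_mul_assoc, mul_smul_comm, map_sum, map_smul,
    Finsupp.finsetSum_apply, Finsupp.smul_apply, smul_eq_mul, structConst]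
  rw [Finset.sum_comm]
  exact Finset.sum_congr rfl fun k _ => Finset.sum_congr rfl fun l _ => by ring

theorem eval_wordPoly (b : Module.Basis κ R A) (v : ι → A) (w : FreeMagma ι) (i : κ) :
    eval (fun p => b.repr (v p.1) p.2) (wordPoly b.structConst w i) =
      b.repr (FreeMagma.lift v w) i := by
  induction w generalizing i with
  | ih1 j => simp [wordPoly]
  | ih2 w₁ w₂ ih₁ ih₂ =>
    simp only [wordPoly_mul, map_mul, b.repr_mul, map_sum, eval_C, ih₁, ih₂]
    exact Finset.sum_congr rfl fun k _ => Finset.sum_congr rfl fun l _ => by ring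

end WordPoly

section WordDet

open MvPolynomial

variable {R ι κ A : Type*} [CommRing R] [Fintype κ] [DecidableEq κ]
  [NonUnitalNonAssocRing A] [Module R A] [SMulCommClass R A A] [IsScalarTower R A A]

noncomputable def wordDet (b : Module.Basis κ R A) (w : κ → FreeMagma ι) :
    MvPolynomial (ι × κ) R :=
  (Matrix.of fun i j => wordPoly b.structConst (w j) i).det

theorem eval_wordDet (b : Module.Basis κ R A) (v : ι → A) (w : κ → FreeMagma ι) :
    eval (fun p => b.repr (v p.1) p.2) (wordDet b w) = b.det (FreeMagma.lift v ∘ w) := by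
  rw [wordDet, RingHom.map_det, b.det_apply]
  congr 1
  ext i j
  exact eval_wordPoly b v (w j) i

end WordDet

section WordDetBaseChange

open MvPolynomial

variable {F K A ι κ : Type*} [CommRing F] [CommRing K] [Algebra F K]
  [NonUnitalNonAssocRing A] [Module F A] [SMulCommClass F A A] [IsScalarTower F A A]

theorem Module.Basis.structConst_baseChange (b : Module.Basis κ F A) :
    (b.baseChange K).structConst = fun k l i => algebraMap F K (b.structConst k l i) := by
  funext k l i
  rw [structConst, structConst, baseChange_apply, baseChange_apply,
    Algebra.TensorProduct.tmul_mul_tmul, one_mul, baseChange_repr_tmul,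
    Algebra.algebraMap_eq_smul_one]

theorem map_wordDet_baseChange [Fintype κ] [DecidableEq κ] (b : Module.Basis κ F A)
    (w : κ → FreeMagma ι) :
    map (algebraMap F K) (wordDet b w) = wordDet (b.baseChange K) w := by
  rw [wordDet, wordDet, RingHom.map_det]
  congr 1
  ext i j : 1
  simp only [RingHom.mapMatrix_apply, Matrix.map_apply, Matrix.of_apply, map_wordPoly,
    b.structConst_baseChange]

end WordDetBaseChange

theorem Module.Basis.exists_isUnit_det_comp_of_span_eq_top {K V α κ : Type*} [Field K]
    [AddCommGroup V] [Module K V] [Fintype κ] [DecidableEq κ] (b : Module.Basis κ K V)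
    {f : α → V} (hf : Submodule.span K (Set.range f) = ⊤) :
    ∃ g : κ → α, IsUnit (b.det (f ∘ g)) := by
  obtain ⟨κ', a, -, hspan, hli⟩ := exists_linearIndependent' K f
  let b' := Module.Basis.mk hli (by rw [hspan, hf])
  let e := b.indexEquiv b'
  refine ⟨a ∘ e, ?_⟩
  have hb' : f ∘ a ∘ e = b'.reindex e.symm := by
    funext i
    simp [b']
  rw [hb']
  exact b.isUnit_det _

open MvPolynomial in
theorem exists_wordSpan_eq_top_of_baseChange {F K A ι : Type*} [Field F] [Infinite F] [Field K]
    [Algebra F K] [NonUnitalNonAssocRing A] [Module F A] [SMulCommClass F A A]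
    [IsScalarTower F A A] [FiniteDimensional F A] {v : ι → K ⊗[F] A}
    (hv : wordSpan K v = ⊤) : ∃ u : ι → A, wordSpan F u = ⊤ := by
  let b := Module.finBasis F A
  obtain ⟨w, hw⟩ := (b.baseChange K).exists_isUnit_det_comp_of_span_eq_top hv
  have hP : wordDet b w ≠ 0 := by
    intro h
    apply hw.ne_zero
    rw [← eval_wordDet, ← map_wordDet_baseChange, h, map_zero, map_zero]
  obtain ⟨x, hx⟩ : ∃ x, eval x (wordDet b w) ≠ 0 := by
    by_contra! h
    exact hP (MvPolynomial.funext fun x => by simp [h x])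
  let u : ι → A := fun j => b.equivFun.symm fun i => x (j, i)
  have hu : (fun p : ι × _ => b.repr (u p.1) p.2) = x :=
    funext fun p => congrFun (b.equivFun.apply_symm_apply _) p.2
  have hdet : IsUnit (b.det (FreeMagma.lift u ∘ w)) := by
    rw [← eval_wordDet, hu]
    exact hx.isUnit
  refine ⟨u, eq_top_iff.2 ?_⟩
  rw [← ((b.is_basis_iff_det).2 hdet).2, Submodule.span_le, Set.range_comp]
  exact (Set.image_subset_range _ _).trans Submodule.subset_span

theorem form_generators_general (F : Type) [Field F] [Infinite F]
    (A B : Type) [NonUnitalNonAssocRing A] [Module F A]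
    [SMulCommClass F A A] [IsScalarTower F A A] [FiniteDimensional F A]
    [NonUnitalNonAssocRing B] [Module F B]
    [SMulCommClass F B B] [IsScalarTower F B B]
    (K : Type) [Field K] [Algebra F K]
    (e : (K ⊗[F] A) ≃ₗ[K] (K ⊗[F] B)) (he : ∀ x y, e (x * y) = e x * e y)
    (n : ℕ) (hB : ∃ s : Finset B, s.card ≤ n ∧ GeneratesAsNonUnitalAlgebra F (s : Set B)) :
    ∃ s : Finset A, s.card ≤ n ∧ GeneratesAsNonUnitalAlgebra F (s : Set A) := by
  classical
  obtain ⟨s, hcard, hs⟩ := hB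
  have hsB : wordSpan F ((↑) : s → B) = ⊤ := by
    rw [← generatesAsNonUnitalAlgebra_range_iff, Subtype.range_coe]
    exact hs
  have hKB : wordSpan K (fun j : s => (1 : K) ⊗ₜ[F] (j : B)) = ⊤ := by
    rw [wordSpan_baseChange, hsB, Submodule.baseChange_top]
  let f : K ⊗[F] B →ₙₐ[K] K ⊗[F] A :=
    { e.symm.toLinearMap with
      map_zero' := map_zero _
      map_mul' := fun x y => e.injective (by simp [he]) }
  obtain ⟨u, hu⟩ := exists_wordSpan_eq_top_of_baseChange
    (wordSpan_comp_eq_top (f := f) e.symm.surjective hKB)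
  refine ⟨Finset.univ.image u, Finset.card_image_le.trans (by simpa using hcard), ?_⟩
  rw [Finset.coe_image, Finset.coe_univ, Set.image_univ]
  exact (generatesAsNonUnitalAlgebra_range_iff u).2 hu

/-- Proposition 4.1: over an infinite field, if A is a form of B (they become isomorphic as
non-unital algebras after extension to some field K) and B is generated by n elements, then
A is generated by n elements. -/
theorem form_generators (F : Type) [Field F] [Infinite F]
    (A B : Type) [NonUnitalNonAssocRing A] [Module F A]
    [SMulCommClass F A A] [IsScalarTower F A A] [FiniteDimensional F A]
    [NonUnitalNonAssocRing B] [Module F B]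
    [SMulCommClass F B B] [IsScalarTower F B B] [FiniteDimensional F B]
    (K : Type) [Field K] [Algebra F K]
    (e : (K ⊗[F] A) ≃ₗ[K] (K ⊗[F] B)) (he : ∀ x y, e (x * y) = e x * e y)
    (n : ℕ) (hB : ∃ s : Finset B, s.card ≤ n ∧ GeneratesAsNonUnitalAlgebra F (s : Set B)) :
    ∃ s : Finset A, s.card ≤ n ∧ GeneratesAsNonUnitalAlgebra F (s : Set A) :=
  form_generators_general F A B K e he n hB
end

section
/- Let F be any field and n ≥ 1. The matrix algebra Mat_n(F) is generated as a non-unital F-algebra by the two matrices E_{1,1} (the matrix unit with 1 in position (1,1) and 0 elsewhere) and C := E_{1,2} + E_{2,3} + ... + E_{n-1,n} + E_{n,1} (the cyclic permutation matrix). -/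
/-! Right multiplication by `C` moves the column index of a matrix unit forward by one, left
multiplication moves the row index back by one. Starting from `E₀₀` this reaches every `E₀ⱼ`
and every `Eᵢ₀`, and the products `Eᵢ₀ * E₀ⱼ = Eᵢⱼ` span all matrices. -/

open TensorProduct

namespace Fin

variable {n : ℕ} [NeZero n]

open Fin.NatCast in
theorem induction_add_one {P : Fin n → Prop} (zero : P 0) (add_one : ∀ i, P i → P (i + 1))
    (i : Fin n) : P i := by
  rw [← Fin.cast_val_eq_self i]
  induction (i : ℕ) with
  | zero => simpa using zero
  | succ k ih => simpa using add_one _ ih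

theorem induction_sub_one {P : Fin n → Prop} (zero : P 0) (sub_one : ∀ i, P i → P (i - 1))
    (i : Fin n) : P i := by
  simpa using induction_add_one (P := fun j ↦ P (-j)) (by simpa using zero)
    (fun j hj ↦ by rw [neg_add, ← sub_eq_add_neg]; exact sub_one _ hj) (-i)

end Fin

namespace Matrix

theorem submodule_eq_top_of_single_mem {R m n : Type*} [Semiring R] [Fintype m] [Fintype n]
    [DecidableEq m] [DecidableEq n] {B : Submodule R (Matrix m n R)}
    (h : ∀ i j, single i j (1 : R) ∈ B) : B = ⊤ := by
  rw [eq_top_iff, ← (stdBasis R m n).span_eq, Submodule.span_le]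
  rintro _ ⟨⟨i, j⟩, rfl⟩
  rw [stdBasis_eq_single]
  exact h i j

variable (R : Type*) [Semiring R] (n : ℕ) [NeZero n]

def cyclicShift : Matrix (Fin n) (Fin n) R :=
  ∑ i : Fin n, single i (i + 1) 1

variable {R n}

theorem single_mul_cyclicShift (i j : Fin n) :
    single i j (1 : R) * cyclicShift R n = single i (j + 1) 1 := by
  rw [cyclicShift, Finset.mul_sum, Finset.sum_eq_single j]
  · rw [single_mul_single_same, one_mul]
  · exact fun k _ hk ↦ single_mul_single_of_ne _ _ _ _ (Ne.symm hk) _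
  · simp

theorem cyclicShift_mul_single (i j : Fin n) :
    cyclicShift R n * single i j (1 : R) = single (i - 1) j 1 := by
  rw [cyclicShift, Finset.sum_mul, Finset.sum_eq_single (i - 1)]
  · rw [sub_add_cancel, single_mul_single_same, one_mul]
  · exact fun k _ hk ↦ single_mul_single_of_ne _ _ _ _ (fun h ↦ hk (eq_sub_of_add_eq h)) _
  · simp

end Matrix

open Matrix in
/-- The matrix algebra Matₙ(F) is generated as a non-unital F-algebra by E₁₁ and the cyclic
permutation matrix E₁₂ + E₂₃ + ... + Eₙ₁. -/
theorem matrix_two_generators (F : Type) [Field F] (n : ℕ) [NeZero n] :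
    GeneratesAsNonUnitalAlgebra F
      ({Matrix.single (0 : Fin n) (0 : Fin n) (1 : F),
        ∑ i : Fin n, Matrix.single i (i + 1) (1 : F)} :
        Set (Matrix (Fin n) (Fin n) F)) := by
  intro B hs hmul
  have hE : single (0 : Fin n) 0 (1 : F) ∈ B := hs (Set.mem_insert _ _)
  have hC : cyclicShift F n ∈ B := hs (Set.mem_insert_of_mem _ rfl)
  have hrow : ∀ j : Fin n, single 0 j (1 : F) ∈ B :=
    Fin.induction_add_one hE fun j hj ↦ (single_mul_cyclicShift (R := F) 0 j) ▸ hmul _ hj _ hC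
  have hcol : ∀ i : Fin n, single i 0 (1 : F) ∈ B :=
    Fin.induction_sub_one hE fun i hi ↦ (cyclicShift_mul_single (R := F) i 0) ▸ hmul _ hC _ hi
  exact submodule_eq_top_of_single_mem fun i j ↦ by
    simpa using hmul _ (hcol i) _ (hrow j)
end

section
/- Let F be a finite field with q elements and let A = F × ... × F (n copies, componentwise operations). Then every element x of A satisfies x^q = x, and consequently any generating set of A as a non-unital F-algebra (or even as a unital F-algebra) must contain at least ⌈log_q(n+1)⌉ elements (respectively ⌈log_q n⌉ if the unit may be used). -/
open TensorProduct

/-!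
An element of `ι → R` generated by `s` is, at each coordinate `i`, a polynomial expression in the
values `g i` for `g ∈ s`, so it is a function of the pattern `i ↦ (g i)_{g ∈ s}` (vanishing at
the zero pattern if no unit is used). Since the coordinate idempotents `Pi.single i 1` separate
coordinates, generation forces the pattern map to be injective (and to miss the zero pattern),
whence `|ι| ≤ |R| ^ |s|` (resp. `|ι| < |R| ^ |s|`).
-/

theorem FiniteField.pow_card_pi {ι F : Type*} [Field F] [Fintype F] (x : ι → F) :
    x ^ Fintype.card F = x :=
  funext fun i => by simp [FiniteField.pow_card]

section Pattern

variable (R : Type*) {ι β : Type*} [CommSemiring R]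

def coordPattern (s : Set (ι → R)) (i : ι) : s → R := fun g => g.1 i

def Subalgebra.factorsThrough (π : ι → β) : Subalgebra R (ι → R) where
  carrier := {x | ∃ f : β → R, f ∘ π = x}
  add_mem' := by
    rintro _ _ ⟨f, rfl⟩ ⟨f', rfl⟩
    exact ⟨f + f', rfl⟩
  mul_mem' := by
    rintro _ _ ⟨f, rfl⟩ ⟨f', rfl⟩
    exact ⟨f * f', rfl⟩
  algebraMap_mem' c := ⟨fun _ => c, rfl⟩

def Submodule.factorsThroughVanishing (π : ι → β) (b : β) : Submodule R (ι → R) where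
  carrier := {x | ∃ f : β → R, f b = 0 ∧ f ∘ π = x}
  add_mem' := by
    rintro _ _ ⟨f, hf, rfl⟩ ⟨f', hf', rfl⟩
    exact ⟨f + f', by simp [hf, hf'], rfl⟩
  zero_mem' := ⟨0, rfl, rfl⟩
  smul_mem' c := by
    rintro _ ⟨f, hf, rfl⟩
    exact ⟨c • f, by simp [hf], rfl⟩

variable {R}

theorem Submodule.mul_mem_factorsThroughVanishing {π : ι → β} {b : β} {x y : ι → R}
    (hx : x ∈ Submodule.factorsThroughVanishing R π b)
    (hy : y ∈ Submodule.factorsThroughVanishing R π b) :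
    x * y ∈ Submodule.factorsThroughVanishing R π b := by
  obtain ⟨f, hf, rfl⟩ := hx
  obtain ⟨f', -, rfl⟩ := hy
  exact ⟨f * f', by simp [hf], rfl⟩

theorem mem_factorsThrough_coordPattern {s : Set (ι → R)} {g : ι → R} (hg : g ∈ s) :
    g ∈ Subalgebra.factorsThrough R (coordPattern R s) :=
  ⟨fun p => p ⟨g, hg⟩, rfl⟩

theorem mem_factorsThroughVanishing_coordPattern {s : Set (ι → R)} {g : ι → R} (hg : g ∈ s) :
    g ∈ Submodule.factorsThroughVanishing R (coordPattern R s) 0 :=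
  ⟨fun p => p ⟨g, hg⟩, rfl, rfl⟩

variable [Nontrivial R] [DecidableEq ι] {π : ι → β}

theorem injective_of_forall_single_eq_comp
    (h : ∀ i, ∃ f : β → R, f ∘ π = Pi.single i 1) : Function.Injective π := by
  intro i j hij
  by_contra hne
  obtain ⟨f, hf⟩ := h i
  have hi : f (π i) = 1 := by simpa using congrFun hf i
  have hj : f (π j) = 0 := by simpa [Pi.single_apply, Ne.symm hne] using congrFun hf j
  exact one_ne_zero (hi.symm.trans (hij ▸ hj))

theorem notMem_range_of_forall_single_mem_factorsThroughVanishing {b : β}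
    (h : ∀ i, Pi.single i 1 ∈ Submodule.factorsThroughVanishing R π b) : b ∉ Set.range π := by
  rintro ⟨i, hi⟩
  obtain ⟨f, hf0, hf⟩ := h i
  have : f (π i) = 1 := by simpa using congrFun hf i
  exact one_ne_zero (this.symm.trans (hi ▸ hf0))

end Pattern

section Counting

variable {R ι : Type*} [CommSemiring R] [Nontrivial R] [Fintype R] [Fintype ι]

theorem card_le_card_pow_of_adjoin_eq_top {s : Finset (ι → R)}
    (hs : Algebra.adjoin R (s : Set (ι → R)) = ⊤) :
    Fintype.card ι ≤ Fintype.card R ^ s.card := by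
  classical
  have hle : Algebra.adjoin R (s : Set (ι → R)) ≤
      Subalgebra.factorsThrough R (coordPattern R (s : Set (ι → R))) :=
    Algebra.adjoin_le fun g hg => mem_factorsThrough_coordPattern hg
  have hinj : Function.Injective (coordPattern R (s : Set (ι → R))) :=
    injective_of_forall_single_eq_comp fun i => hle (hs ▸ Algebra.mem_top)
  simpa using Fintype.card_le_of_injective _ hinj

theorem card_lt_card_pow_of_generatesAsNonUnitalAlgebra {s : Finset (ι → R)}
    (hs : GeneratesAsNonUnitalAlgebra R (s : Set (ι → R))) :
    Fintype.card ι < Fintype.card R ^ s.card := by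
  classical
  have htop : Submodule.factorsThroughVanishing R (coordPattern R (s : Set (ι → R))) 0 = ⊤ :=
    hs _ (fun g hg => mem_factorsThroughVanishing_coordPattern hg)
      fun x hx y hy => Submodule.mul_mem_factorsThroughVanishing hx hy
  have hsingle : ∀ i, Pi.single i 1 ∈
      Submodule.factorsThroughVanishing R (coordPattern R (s : Set (ι → R))) 0 :=
    fun i => htop ▸ Submodule.mem_top
  have hinj : Function.Injective (coordPattern R (s : Set (ι → R))) :=
    injective_of_forall_single_eq_comp fun i => (hsingle i).imp fun _ => And.right
  simpa using Fintype.card_lt_of_injective_of_notMem _ hinj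
    (notMem_range_of_forall_single_mem_factorsThroughVanishing hsingle)

end Counting

/-- Over the field F with q elements, every x ∈ Fⁿ satisfies x^q = x, and a generating set of
Fⁿ as a non-unital F-algebra has at least ⌈log_q (n+1)⌉ elements (resp. ⌈log_q n⌉ if use of
the unit is allowed, i.e., for generation as a unital algebra). -/
theorem finite_field_lower_bound (F : Type) [Field F] [Fintype F] (q : ℕ)
    (hq : Fintype.card F = q) (n : ℕ) :
    (∀ x : Fin n → F, x ^ q = x) ∧
    (∀ s : Finset (Fin n → F), GeneratesAsNonUnitalAlgebra F (s : Set (Fin n → F)) →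
      Nat.clog q (n + 1) ≤ s.card) ∧
    (∀ s : Finset (Fin n → F), Algebra.adjoin F (s : Set (Fin n → F)) = ⊤ →
      Nat.clog q n ≤ s.card) := by
  subst hq
  have hq : 1 < Fintype.card F := Fintype.one_lt_card
  refine ⟨FiniteField.pow_card_pi, fun s hs => ?_, fun s hs => ?_⟩
  · rw [Nat.clog_le_iff_le_pow hq]
    simpa using card_lt_card_pow_of_generatesAsNonUnitalAlgebra hs
  · rw [Nat.clog_le_iff_le_pow hq]
    simpa using card_le_card_pow_of_adjoin_eq_top hs
end

section
/- Let F be a finite field with q elements and let A be an étale F-algebra of rank n (i.e., a finite product of finite separable field extensions of F with total dimension n). Then A can be generated as a non-unital F-algebra by ⌈log_q(n+1)⌉ elements. -/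
/-!
Write `A ≃ₐ[F] ∏ i, K i` with `K i` finite fields of degrees `d i` summing to `n`, and let
`q ^ (k + 1) ≥ n + 1`. For each `i` choose a point `(γ i, c i) ∈ K i × F ^ k` which is nonzero,
with `γ i` a primitive element of `K i / F`, such that no `F`-isomorphism `K i ≃ K j` (`i ≠ j`)
carries the point of `i` to that of `j`. Greedily this is possible: the admissible points of
`K j × F ^ k` number at least `q ^ (k + 1) - 1 ≥ n` (translates of one primitive element by `F`),
while the earlier points rule out at most `∑ i ≠ j, d i < n` of them.
The `k + 1` elements `u = (γ i)ᵢ` and `b m = (c i m)ᵢ` generate `∏ i, K i` as a unital algebra,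
because the projections restricted to the algebra they generate have distinct maximal kernels
(Chinese remainder theorem), and they generate the unit ideal because no point vanishes. The
non-unital algebra they generate is an ideal of the unital one, so it contains `1`.
-/

open TensorProduct

open Module

theorem GeneratesAsNonUnitalAlgebra.of_adjoin_eq_top {R A : Type*} [CommSemiring R]
    [NonUnitalNonAssocSemiring A] [Module R A] [IsScalarTower R A A] [SMulCommClass R A A]
    {s : Set A} (h : NonUnitalAlgebra.adjoin R s = ⊤) : GeneratesAsNonUnitalAlgebra R s := by
  intro B hsB hmul
  have hle := NonUnitalAlgebra.adjoin_le
    (S := B.toNonUnitalSubalgebra fun x y hx hy ↦ hmul x hx y hy) hsB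
  rw [h, top_le_iff] at hle
  simpa using congrArg NonUnitalSubalgebra.toSubmodule hle

theorem NonUnitalAlgebra.adjoin_image_eq_top {R A B : Type*} [CommSemiring R] [Semiring A]
    [Semiring B] [Algebra R A] [Algebra R B] (e : A ≃ₐ[R] B) {s : Set A}
    (h : adjoin R s = ⊤) : adjoin R (e '' s) = ⊤ := by
  rw [← NonUnitalAlgHom.map_adjoin, h]
  exact eq_top_iff.mpr fun y ↦ ⟨e.symm y, trivial, e.apply_symm_apply y⟩

theorem NonUnitalAlgebra.adjoin_eq_top_of_algebra_adjoin_eq_top_of_span_eq_top {R A : Type*}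
    [CommSemiring R] [CommRing A] [Algebra R A] {s : Set A} (hs : Algebra.adjoin R s = ⊤)
    (hspan : Ideal.span s = ⊤) : adjoin R s = ⊤ := by
  have mul_mem : ∀ x z, z ∈ adjoin R s → x * z ∈ adjoin R s := by
    intro x z hz
    have hx : x ∈ Subalgebra.toSubmodule (Algebra.adjoin R (adjoin R s : Set A)) := by
      rw [Algebra.adjoin_nonUnitalSubalgebra, hs]; trivial
    rw [Algebra.adjoin_nonUnitalSubalgebra_eq_span, Submodule.mem_sup] at hx
    obtain ⟨_, h1, y, hy, rfl⟩ := hx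
    obtain ⟨r, rfl⟩ := Submodule.mem_span_singleton.mp h1
    rw [add_mul, smul_mul_assoc, one_mul]
    exact add_mem (SMulMemClass.smul_mem r hz) (mul_mem hy hz)
  let I : Ideal A :=
    { carrier := adjoin R s, add_mem' := add_mem, zero_mem' := zero_mem _,
      smul_mem' := fun c _ hx ↦ mul_mem c _ hx }
  have one_mem : (1 : A) ∈ adjoin R s :=
    Ideal.span_le (I := I) |>.mpr (subset_adjoin R) (hspan ▸ Submodule.mem_top)
  exact eq_top_iff.mpr fun x ↦ mul_one x ▸ mul_mem x 1 one_mem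

theorem Pi.span_eq_top_of_forall_exists_ne_zero {ι : Type*} [Finite ι] {K : ι → Type*}
    [∀ i, Field (K i)] {S : Set (∀ i, K i)} (h : ∀ i, ∃ x ∈ S, x i ≠ 0) : Ideal.span S = ⊤ := by
  classical
  cases nonempty_fintype ι
  choose x hxS hx using h
  have hsum : ∑ i, Pi.single i (x i i)⁻¹ * x i = 1 := by
    ext j
    rw [Finset.sum_apply, Finset.sum_eq_single j (fun i _ hij ↦ by simp [hij.symm]) (by simp)]
    simp [hx j]
  rw [Ideal.eq_top_iff_one, ← hsum]
  exact Ideal.sum_mem _ fun i _ ↦ Ideal.mul_mem_left _ _ (Ideal.subset_span (hxS i))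

theorem AlgHom.exists_algEquiv_apply_eq_of_ker_eq {R A K L : Type*} [CommSemiring R] [Ring A]
    [Semiring K] [Semiring L] [Algebra R A] [Algebra R K] [Algebra R L] {f : A →ₐ[R] K}
    {g : A →ₐ[R] L} (hf : Function.Surjective f) (hg : Function.Surjective g)
    (h : RingHom.ker f = RingHom.ker g) : ∃ σ : K ≃ₐ[R] L, ∀ x, σ (f x) = g x := by
  refine ⟨((Ideal.quotientKerAlgEquivOfSurjective hf).symm.trans
    (Ideal.quotientEquivAlgOfEq R h)).trans (Ideal.quotientKerAlgEquivOfSurjective hg), fun x ↦ ?_⟩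
  simp

theorem Pi.adjoin_eq_top_of_separates {R ι : Type*} [CommRing R] [Finite ι] {K : ι → Type*}
    [∀ i, Field (K i)] [∀ i, Algebra R (K i)] {S : Set (∀ i, K i)}
    (hgen : ∀ i, Algebra.adjoin R ((fun x ↦ x i) '' S) = ⊤)
    (hsep : ∀ i j, i ≠ j → ∀ σ : K i ≃ₐ[R] K j, ∃ x ∈ S, σ (x i) ≠ x j) :
    Algebra.adjoin R S = ⊤ := by
  set C := Algebra.adjoin R S
  let π i : C →ₐ[R] K i := (Pi.evalAlgHom R K i).comp C.val
  have hπ i : Function.Surjective (π i) := by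
    rw [← AlgHom.range_eq_top, eq_top_iff, ← hgen i]
    exact Algebra.adjoin_le <| by
      rintro _ ⟨x, hx, rfl⟩
      exact ⟨⟨x, Algebra.subset_adjoin hx⟩, rfl⟩
  have hcop : Pairwise (Function.onFun IsCoprime fun i ↦ RingHom.ker (π i)) := by
    intro i j hij
    refine Ideal.isCoprime_iff_sup_eq.mpr <|
      (RingHom.ker_isMaximal_of_surjective _ (hπ i)).coprime_of_ne
        (RingHom.ker_isMaximal_of_surjective _ (hπ j)) fun hker ↦ ?_
    obtain ⟨σ, hσ⟩ := AlgHom.exists_algEquiv_apply_eq_of_ker_eq (hπ i) (hπ j) hker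
    obtain ⟨x, hx, hne⟩ := hsep i j hij σ
    exact hne (hσ ⟨x, Algebra.subset_adjoin hx⟩)
  refine eq_top_iff.mpr fun y _ ↦ ?_
  obtain ⟨c, hc⟩ := Ideal.pi_quotient_surjective hcop
    fun i ↦ (Ideal.quotientKerAlgEquivOfSurjective (hπ i)).symm (y i)
  have hcy : (c : ∀ i, K i) = y := funext fun i ↦ by
    simpa [π] using congrArg (Ideal.quotientKerAlgEquivOfSurjective (hπ i)) (hc i)
  exact hcy ▸ c.2

theorem exists_forall_mem_and_pairwise_not_clash {ι : Type*} [Fintype ι] {X : ι → Type*}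
    [∀ i, Finite (X i)] (good : ∀ i, Set (X i)) (clash : ∀ i j, X i → X j → Prop)
    (clash_symm : ∀ i j x y, clash i j x y → clash j i y x) (w : ι → ℕ)
    (hw : ∀ i j (x : X i), {y | clash i j x y}.ncard ≤ w i)
    (hgood : ∀ j, ∑ i, w i < (good j).ncard + w j) :
    ∃ x : ∀ i, X i, (∀ i, x i ∈ good i) ∧ ∀ i j, i ≠ j → ¬clash i j (x i) (x j) := by
  classical
  have hne i : (good i).Nonempty :=
    Set.nonempty_of_ncard_ne_zero fun h ↦ by
      have := hgood i
      have := Finset.single_le_sum (fun j _ ↦ Nat.zero_le (w j)) (Finset.mem_univ i)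
      omega
  choose x₀ hx₀ using hne
  suffices ∀ s : Finset ι, ∃ x : ∀ i, X i,
      (∀ i, x i ∈ good i) ∧ ∀ i ∈ s, ∀ j ∈ s, i ≠ j → ¬clash i j (x i) (x j) by
    obtain ⟨x, hxg, hx⟩ := this Finset.univ
    exact ⟨x, hxg, fun i j ↦ hx i (Finset.mem_univ i) j (Finset.mem_univ j)⟩
  intro s
  induction s using Finset.induction_on with
  | empty => exact ⟨x₀, hx₀, by simp⟩
  | insert a s ha ih =>
    obtain ⟨x, hxg, hx⟩ := ih
    obtain ⟨y, hy, hyc⟩ : ∃ y ∈ good a, ∀ i ∈ s, ¬clash i a (x i) y := by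
      by_contra! h
      have hcover : good a ⊆ ⋃ i ∈ s, {y | clash i a (x i) y} := fun y hy ↦ by
        simpa using h y hy
      have := calc (good a).ncard + w a
          ≤ (⋃ i ∈ s, {y | clash i a (x i) y}).ncard + w a :=
            Nat.add_le_add_right (Set.ncard_le_ncard hcover (Set.toFinite _)) _
        _ ≤ ∑ i ∈ s, w i + w a :=
            Nat.add_le_add_right ((s.set_ncard_biUnion_le _).trans
              (Finset.sum_le_sum fun i _ ↦ hw i a (x i))) _
        _ = ∑ i ∈ insert a s, w i := by rw [Finset.sum_insert ha, add_comm]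
        _ ≤ ∑ i, w i := Finset.sum_le_sum_of_subset (Finset.subset_univ _)
      exact absurd (hgood a) (not_lt.mpr this)
    refine ⟨Function.update x a y, fun i ↦ ?_, ?_⟩
    · rcases eq_or_ne i a with rfl | hia
      · simpa using hy
      · simpa [hia] using hxg i
    · intro i hi j hj hij
      replace hi := Finset.mem_insert.mp hi
      replace hj := Finset.mem_insert.mp hj
      by_cases hia : i = a <;> by_cases hja : j = a
      · exact absurd (hia.trans hja.symm) hij
      · subst hia
        simpa [hja] using fun h ↦ hyc j (hj.resolve_left hja) (clash_symm _ _ _ _ h)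
      · subst hja
        simpa [hia] using hyc i (hi.resolve_left hia)
      · simpa [hia, hja] using hx i (hi.resolve_left hia) j (hj.resolve_left hja) hij

def IsConjugatePoint (F : Type*) {K L V : Type*} [CommSemiring F] [Semiring K] [Semiring L]
    [Algebra F K] [Algebra F L] (p : K × V) (p' : L × V) : Prop :=
  ∃ σ : K ≃ₐ[F] L, σ p.1 = p'.1 ∧ p.2 = p'.2

theorem IsConjugatePoint.symm {F K L V : Type*} [CommSemiring F] [Semiring K] [Semiring L]
    [Algebra F K] [Algebra F L] {p : K × V} {p' : L × V} (h : IsConjugatePoint F p p') :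
    IsConjugatePoint F p' p := by
  obtain ⟨σ, h1, h2⟩ := h
  exact ⟨σ.symm, by rw [← h1, σ.symm_apply_apply], h2.symm⟩

theorem ncard_setOf_isConjugatePoint_le {F K L V : Type*} [Field F] [Field K] [Field L]
    [Algebra F K] [Algebra F L] [FiniteDimensional F K] (p : K × V) :
    {p' : L × V | IsConjugatePoint F p p'}.ncard ≤ finrank F K :=
  calc _ ≤ (Set.range fun σ : K →ₐ[F] L ↦ (σ p.1, p.2)).ncard := by
        refine Set.ncard_le_ncard ?_ (Set.toFinite _)
        rintro _ ⟨σ, h1, h2⟩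
        exact ⟨σ, Prod.ext h1 h2⟩
    _ ≤ Nat.card (K →ₐ[F] L) := by
        rw [← Nat.card_coe_set_eq]
        exact Finite.card_range_le _
    _ ≤ finrank F K := card_algHom_le_finrank _ _ _

theorem card_le_ncard_adjoin_singleton_eq_top (F K : Type*) [Field F] [Finite F] [Field K]
    [Algebra F K] [FiniteDimensional F K] :
    Nat.card F ≤ {γ : K | Algebra.adjoin F {γ} = ⊤}.ncard := by
  have : Finite K := Module.finite_of_finite F
  obtain ⟨γ, hγ⟩ := Field.exists_primitive_element_of_finite_bot F K
  rw [IntermediateField.adjoin_simple_eq_top_iff_of_isAlgebraic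
    (Algebra.IsAlgebraic.isAlgebraic γ)] at hγ
  have hshift (a : F) : Algebra.adjoin F {γ + algebraMap F K a} = ⊤ := by
    refine top_le_iff.mp (hγ ▸ Algebra.adjoin_le (Set.singleton_subset_iff.mpr ?_))
    simpa using sub_mem (Algebra.self_mem_adjoin_singleton F (γ + algebraMap F K a))
      (Subalgebra.algebraMap_mem _ a)
  rw [← Nat.card_coe_set_eq]
  exact Nat.card_le_card_of_injective (fun a ↦ ⟨_, hshift a⟩) fun a b h ↦
    (algebraMap F K).injective (by simpa using congrArg Subtype.val h)

theorem pow_succ_le_ncard_primitive_points_add_one (F K : Type*) [Field F] [Finite F] [Field K]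
    [Algebra F K] [FiniteDimensional F K] (k : ℕ) :
    Nat.card F ^ (k + 1) ≤
      {p : K × (Fin k → F) | Algebra.adjoin F {p.1} = ⊤ ∧ p ≠ 0}.ncard + 1 := by
  have : Finite K := Module.finite_of_finite F
  set P := {γ : K | Algebra.adjoin F {γ} = ⊤} ×ˢ (Set.univ : Set (Fin k → F))
  calc Nat.card F ^ (k + 1) = Nat.card F * Nat.card (Fin k → F) := by
        rw [Nat.card_fun, Nat.card_fin, pow_succ, mul_comm]
    _ ≤ P.ncard := by
        rw [Set.ncard_prod, Set.ncard_univ]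
        exact Nat.mul_le_mul_right _ (card_le_ncard_adjoin_singleton_eq_top F K)
    _ ≤ (P \ {0}).ncard + 1 := by
        simpa using Set.ncard_le_ncard_sdiff_add_ncard P {0}
    _ ≤ _ := by
        refine Nat.add_le_add_right (Set.ncard_le_ncard ?_ (Set.toFinite _)) 1
        rintro p ⟨⟨hp, -⟩, hp0⟩
        exact ⟨hp, hp0⟩

theorem exists_separated_primitive_points (F : Type*) {ι : Type*} [Field F] [Finite F] [Fintype ι]
    (K : ι → Type*) [∀ i, Field (K i)] [∀ i, Algebra F (K i)] [∀ i, FiniteDimensional F (K i)]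
    {k : ℕ} (hk : ∑ i, finrank F (K i) < Nat.card F ^ (k + 1)) :
    ∃ p : ∀ i, K i × (Fin k → F), (∀ i, Algebra.adjoin F {(p i).1} = ⊤ ∧ p i ≠ 0) ∧
      ∀ i j, i ≠ j → ¬IsConjugatePoint F (p i) (p j) := by
  have _ i : Finite (K i) := Module.finite_of_finite F
  have hgood j : ∑ i, finrank F (K i) <
      {p : K j × (Fin k → F) | Algebra.adjoin F {p.1} = ⊤ ∧ p ≠ 0}.ncard + finrank F (K j) := by
    have := pow_succ_le_ncard_primitive_points_add_one F (K j) k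
    have : 0 < finrank F (K j) := finrank_pos
    omega
  exact exists_forall_mem_and_pairwise_not_clash _ (fun _ _ ↦ IsConjugatePoint F)
    (fun _ _ _ _ ↦ IsConjugatePoint.symm) _ (fun _ _ ↦ ncard_setOf_isConjugatePoint_le) hgood

theorem Pi.nonUnitalAdjoin_eq_top_of_primitive_points {F ι : Type*} [Field F] [Finite ι]
    {K : ι → Type*} [∀ i, Field (K i)] [∀ i, Algebra F (K i)] {k : ℕ}
    (p : ∀ i, K i × (Fin k → F)) (hp : ∀ i, Algebra.adjoin F {(p i).1} = ⊤ ∧ p i ≠ 0)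
    (hsep : ∀ i j, i ≠ j → ¬IsConjugatePoint F (p i) (p j)) :
    NonUnitalAlgebra.adjoin F
      (insert (fun i ↦ (p i).1) (Set.range fun m i ↦ algebraMap F (K i) ((p i).2 m))) = ⊤ := by
  set u : ∀ i, K i := fun i ↦ (p i).1
  set b : Fin k → ∀ i, K i := fun m i ↦ algebraMap F (K i) ((p i).2 m)
  refine NonUnitalAlgebra.adjoin_eq_top_of_algebra_adjoin_eq_top_of_span_eq_top ?_ ?_
  · refine Pi.adjoin_eq_top_of_separates (fun i ↦ top_le_iff.mp ?_) fun i j hij σ ↦ ?_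
    · exact (hp i).1 ▸ Algebra.adjoin_mono
        (Set.singleton_subset_iff.mpr ⟨u, Set.mem_insert _ _, rfl⟩)
    · by_contra! h
      refine hsep i j hij ⟨σ, h u (Set.mem_insert _ _),
        funext fun m ↦ (algebraMap F (K j)).injective ?_⟩
      simpa [b] using h (b m) (Set.mem_insert_of_mem _ ⟨m, rfl⟩)
  · refine Pi.span_eq_top_of_forall_exists_ne_zero fun i ↦ ?_
    by_cases hu : (p i).1 = 0
    · obtain ⟨m, hm⟩ : ∃ m, (p i).2 m ≠ 0 := by
        by_contra! h
        exact (hp i).2 (Prod.ext hu (funext h))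
      exact ⟨b m, Set.mem_insert_of_mem _ ⟨m, rfl⟩, by simpa [b] using hm⟩
    · exact ⟨u, Set.mem_insert _ _, hu⟩

theorem Pi.exists_finset_nonUnitalAdjoin_eq_top {F ι : Type*} [Field F] [Finite F] [Fintype ι]
    (K : ι → Type*) [∀ i, Field (K i)] [∀ i, Algebra F (K i)] [∀ i, FiniteDimensional F (K i)]
    {k : ℕ} (hk : ∑ i, finrank F (K i) < Nat.card F ^ k) :
    ∃ s : Finset (∀ i, K i), s.card ≤ k ∧ NonUnitalAlgebra.adjoin F (s : Set (∀ i, K i)) = ⊤ := by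
  classical
  cases k with
  | zero =>
    have : IsEmpty ι := ⟨fun i ↦ by
      have := Finset.single_le_sum (fun j _ ↦ Nat.zero_le (finrank F (K j))) (Finset.mem_univ i)
      have : 0 < finrank F (K i) := finrank_pos
      simp only [pow_zero] at hk
      omega⟩
    exact ⟨∅, by simp, NonUnitalAlgebra.eq_top_iff.mpr fun x ↦ Subsingleton.elim 0 x ▸ zero_mem _⟩
  | succ k =>
    obtain ⟨p, hp, hsep⟩ := exists_separated_primitive_points F K hk
    refine ⟨insert (fun i ↦ (p i).1)
      (Finset.univ.image fun m i ↦ algebraMap F (K i) ((p i).2 m)), ?_, ?_⟩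
    · refine (Finset.card_insert_le _ _).trans (Nat.add_le_add_right ?_ 1)
      simpa using Finset.card_image_le (s := Finset.univ (α := Fin k))
    · simpa using Pi.nonUnitalAdjoin_eq_top_of_primitive_points p hp hsep

/-- Every étale algebra of rank n over the finite field F with q elements can be generated by
⌈log_q (n+1)⌉ elements as a non-unital F-algebra. -/
theorem etale_generators_finite_field (F : Type) [Field F] [Fintype F] (q : ℕ)
    (hq : Fintype.card F = q)
    (A : Type) [CommRing A] [Algebra F A] [Algebra.Etale F A]
    (n : ℕ) (hn : Module.finrank F A = n) :
    ∃ s : Finset A, s.card ≤ Nat.clog q (n + 1) ∧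
      GeneratesAsNonUnitalAlgebra F (s : Set A) := by
  classical
  obtain ⟨I, _, K, _, _, e, hK⟩ := (Algebra.Etale.iff_exists_algEquiv_prod F A).mp ‹_›
  have _ i : FiniteDimensional F (K i) := (hK i).1
  cases nonempty_fintype I
  have hsum : ∑ i, finrank F (K i) < Nat.card F ^ Nat.clog q (n + 1) := by
    rw [← Module.finrank_pi_fintype, ← e.toLinearEquiv.finrank_eq, hn, Nat.card_eq_fintype_card,
      hq]
    exact Nat.lt_of_succ_le (Nat.le_pow_clog (hq ▸ Fintype.one_lt_card) _)
  obtain ⟨s, hcard, hs⟩ := Pi.exists_finset_nonUnitalAdjoin_eq_top K hsum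
  refine ⟨s.image e.symm, Finset.card_image_le.trans hcard,
    GeneratesAsNonUnitalAlgebra.of_adjoin_eq_top ?_⟩
  simpa using NonUnitalAlgebra.adjoin_image_eq_top e.symm hs
end

section
/- Let F be an infinite field, let A be a finite-dimensional algebra over F identified with the F-points of affine space A^r via a choice of basis (r = dim_F A). Then there is a Zariski-open subscheme U of (A^r)^n such that for every field extension K/F, the K-points of U are exactly the n-tuples (x_1, ..., x_n) ∈ (A ⊗_F K)^n that generate A ⊗_F K as a non-unital K-algebra; in particular, the property of n elements generating A is Zariski open and stable under field extension in this sense. -/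
open TensorProduct

/-! The subspaces `T k` spanned by the products of depth at most `k` of the generators form an
increasing chain with `T (k + 1) = T k + T k * T k`, so it is stationary from `k = r = dim A` on,
and the tuple generates iff `T r` is everything, i.e. iff some `r × r` minor of the coordinate
matrix of the depth-`r` products is nonzero. Through the structure constants of `A`, these
coordinates are polynomials over `F` in the coordinates of the tuple, the same for every
extension `K`; so the ideal generated by the minors cuts out the generating tuples over
every `K`. -/

open Module Submodule MvPolynomial

universe u

def IterProdIdx (ι : Type u) : ℕ → Type u
  | 0 => ι
  | k + 1 => IterProdIdx ι k ⊕ IterProdIdx ι k × IterProdIdx ι k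

instance IterProdIdx.instFintype (ι : Type u) [Fintype ι] : ∀ k, Fintype (IterProdIdx ι k)
  | 0 => inferInstanceAs (Fintype ι)
  | k + 1 =>
    letI := IterProdIdx.instFintype ι k
    inferInstanceAs (Fintype (IterProdIdx ι k ⊕ IterProdIdx ι k × IterProdIdx ι k))

def iterProd {ι : Type u} {V : Type*} [Mul V] (v : ι → V) : ∀ k, IterProdIdx ι k → V
  | 0 => v
  | k + 1 => Sum.elim (iterProd v k) fun p => iterProd v k p.1 * iterProd v k p.2

theorem range_iterProd_succ {ι : Type u} {V : Type*} [Mul V] (v : ι → V) (k : ℕ) :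
    Set.range (iterProd v (k + 1)) = Set.range (iterProd v k) ∪
      Set.range fun p : IterProdIdx ι k × IterProdIdx ι k =>
        iterProd v k p.1 * iterProd v k p.2 :=
  Set.Sum.elim_range _ _

theorem Submodule.stabilizes_at_finrank {K V : Type*} [DivisionRing K] [AddCommGroup V]
    [Module K V] [FiniteDimensional K V] {T : ℕ → Submodule K V}
    (f : Submodule K V → Submodule K V) (hf : ∀ S, S ≤ f S)
    (hT : ∀ k, T (k + 1) = f (T k)) :
    T (finrank K V + 1) = T (finrank K V) := by
  have hle k : T k ≤ T (k + 1) := hT k ▸ hf (T k)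
  have grows k (h : T (k + 1) ≠ T k) : finrank K (T k) < finrank K (T (k + 1)) :=
    finrank_lt_finrank_of_lt (lt_of_le_of_ne (hle k) (Ne.symm h))
  have key : ∀ k, T (k + 1) = T k ∨ k ≤ finrank K (T k) := by
    intro k
    induction k with
    | zero => exact .inr (Nat.zero_le _)
    | succ k ih =>
      by_cases h : T (k + 1) = T k
      · exact .inl (by rw [hT (k + 1), h, ← hT k, h])
      · exact .inr (by have := grows k h; have := ih.resolve_left h; omega)
  by_contra hne
  have := (grows _ hne).trans_le (finrank_le _)
  have := (key _).resolve_left hne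
  omega

section iterProdSpan

variable (K : Type*) {V ι : Type*} [Field K] [NonUnitalNonAssocRing V] [Module K V]
  [SMulCommClass K V V] [IsScalarTower K V V] (v : ι → V)

def iterProdSpan (k : ℕ) : Submodule K V := span K (Set.range (iterProd v k))

theorem iterProdSpan_succ (k : ℕ) :
    iterProdSpan K v (k + 1) = iterProdSpan K v k ⊔
      map₂ (LinearMap.mul K V) (iterProdSpan K v k) (iterProdSpan K v k) := by
  rw [iterProdSpan, iterProdSpan, map₂_span_span, Set.image2_range, ← span_union,
    range_iterProd_succ]
  rfl

variable {K v}

theorem iterProdSpan_mono : Monotone (iterProdSpan K v) :=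
  monotone_nat_of_le_succ fun k => le_sup_left.trans (iterProdSpan_succ K v k).ge

theorem range_subset_iterProdSpan (k : ℕ) : Set.range v ⊆ iterProdSpan K v k :=
  Set.Subset.trans (subset_span (s := Set.range (iterProd v 0))) (iterProdSpan_mono k.zero_le)

theorem iterProdSpan_le {B : Submodule K V} (hv : Set.range v ⊆ B)
    (hB : ∀ x ∈ B, ∀ y ∈ B, x * y ∈ B) (k : ℕ) : iterProdSpan K v k ≤ B := by
  induction k with
  | zero => exact span_le.mpr hv
  | succ k ih =>
    rw [iterProdSpan_succ, sup_le_iff, map₂_le]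
    exact ⟨ih, fun x hx y hy => hB x (ih hx) y (ih hy)⟩

variable [FiniteDimensional K V]

theorem generates_iff_iterProdSpan_eq_top :
    GeneratesAsNonUnitalAlgebra K (Set.range v) ↔ iterProdSpan K v (finrank K V) = ⊤ := by
  have hstab := stabilizes_at_finrank (fun S => S ⊔ map₂ (LinearMap.mul K V) S S)
    (fun _ => le_sup_left) (iterProdSpan_succ K v)
  refine ⟨fun h => h _ ?_ fun x hx y hy => ?_, fun h B hv hB => top_le_iff.mp ?_⟩
  · exact range_subset_iterProdSpan _
  · rw [← hstab, iterProdSpan_succ]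
    exact mem_sup_right (apply_mem_map₂ _ hx hy)
  · exact h ▸ iterProdSpan_le hv hB _

end iterProdSpan

theorem Module.Basis.span_range_eq_top_iff_exists_det_ne_zero {K V ι κ : Type*} [Field K]
    [AddCommGroup V] [Module K V] [Finite ι] [Fintype κ] [DecidableEq κ] (e : Basis κ K V)
    (u : ι → V) : span K (Set.range u) = ⊤ ↔ ∃ g : κ → ι, e.det (u ∘ g) ≠ 0 := by
  simp_rw [ne_eq, ← isUnit_iff_ne_zero, ← e.is_basis_iff_det]
  constructor
  · intro hspan
    obtain ⟨κ', a, -, hsp, hli⟩ := exists_linearIndependent' K u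
    let e' : Basis κ' K V := .mk hli (by rw [hsp, hspan])
    refine ⟨a ∘ e.indexEquiv e', hli.comp _ (Equiv.injective _), ?_⟩
    rw [← Function.comp_assoc, EquivLike.range_comp, hsp, hspan]
  · rintro ⟨g, -, hg⟩
    exact top_le_iff.mp (hg ▸ span_mono (Set.range_comp_subset_range g u))

theorem Ideal.exists_mem_span_apply_ne_zero_iff {R S : Type*} [CommSemiring R] [Semiring S]
    (φ : R →+* S) (s : Set R) :
    (∃ f ∈ Ideal.span s, φ f ≠ 0) ↔ ∃ f ∈ s, φ f ≠ 0 := by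
  simpa [SetLike.le_def, Set.subset_def] using (Ideal.span_le (I := RingHom.ker φ)).not

section coordinates

theorem Module.Basis.repr_mul_apply {K V κ : Type*} [CommRing K] [NonUnitalNonAssocRing V]
    [Module K V] [SMulCommClass K V V] [IsScalarTower K V V] [Fintype κ] (e : Basis κ K V)
    (u w : V) (l : κ) :
    e.repr (u * w) l = ∑ i, ∑ j, e.repr u i * e.repr w j * e.repr (e i * e j) l := by
  conv_lhs => rw [← e.sum_repr u, ← e.sum_repr w]
  simp only [Finset.sum_mul, Finset.mul_sum, smul_mul_assoc, mul_smul_comm, map_sum, map_smul,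
    Finsupp.coe_finsetSum, Finset.sum_apply, Finsupp.smul_apply, smul_eq_mul]
  rw [Finset.sum_comm]
  congr! 2
  ring

variable {F A K ι κ : Type*} [CommRing F] [NonUnitalNonAssocRing A] [Module F A]
  [SMulCommClass F A A] [IsScalarTower F A A] [CommRing K] [Algebra F K] [Fintype κ]

theorem Module.Basis.baseChange_repr_mul_apply (b : Basis κ F A) (u w : K ⊗[F] A) (l : κ) :
    (b.baseChange K).repr (u * w) l = ∑ i, ∑ j, (b.baseChange K).repr u i *
      (b.baseChange K).repr w j * algebraMap F K (b.repr (b i * b j) l) := by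
  simp only [repr_mul_apply (b.baseChange K), baseChange_apply,
    Algebra.TensorProduct.tmul_mul_tmul, one_mul, baseChange_repr_tmul,
    Algebra.algebraMap_eq_smul_one]

noncomputable def iterProdPoly (b : Basis κ F A) :
    ∀ k, IterProdIdx ι k → κ → MvPolynomial (ι × κ) F
  | 0 => fun i j => X (i, j)
  | k + 1 => Sum.elim (iterProdPoly b k) fun p l =>
      ∑ i, ∑ j, iterProdPoly b k p.1 i * iterProdPoly b k p.2 j * C (b.repr (b i * b j) l)

theorem baseChange_repr_iterProd (b : Basis κ F A) (x : ι → κ → K) (k : ℕ)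
    (m : IterProdIdx ι k) (l : κ) :
    (b.baseChange K).repr (iterProd (fun i => ∑ j, x i j • ((1 : K) ⊗ₜ[F] b j)) k m) l =
      aeval (fun p : ι × κ => x p.1 p.2) (iterProdPoly b k m l) := by
  induction k generalizing l with
  | zero =>
    simp only [iterProd, iterProdPoly, aeval_X, ← Basis.baseChange_apply, Basis.repr_sum_self]
  | succ k ih =>
    rcases m with m | ⟨m₁, m₂⟩
    · exact ih m l
    · simp only [iterProd, iterProdPoly, Sum.elim_inr, Basis.baseChange_repr_mul_apply, ih,
        map_sum, map_mul, aeval_C]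

noncomputable def iterProdMinor [DecidableEq κ] (b : Basis κ F A) (k : ℕ)
    (g : κ → IterProdIdx ι k) : MvPolynomial (ι × κ) F :=
  (Matrix.of fun l i => iterProdPoly b k (g i) l).det

theorem aeval_iterProdMinor [DecidableEq κ] (b : Basis κ F A) (x : ι → κ → K) (k : ℕ)
    (g : κ → IterProdIdx ι k) :
    aeval (fun p : ι × κ => x p.1 p.2) (iterProdMinor b k g) =
      (b.baseChange K).det
        (iterProd (fun i => ∑ j, x i j • ((1 : K) ⊗ₜ[F] b j)) k ∘ g) := by
  rw [iterProdMinor, ← AlgHom.coe_toRingHom, RingHom.map_det, Basis.det_apply]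
  congr 1
  ext l i
  simp [Basis.toMatrix_apply, baseChange_repr_iterProd]

end coordinates

theorem generating_tuples_open_general (F : Type) [Field F]
    (A : Type) [NonUnitalNonAssocRing A] [Module F A]
    [SMulCommClass F A A] [IsScalarTower F A A]
    (r : ℕ) (b : Module.Basis (Fin r) F A) (n : ℕ) :
    ∃ I : Ideal (MvPolynomial (Fin n × Fin r) F),
      ∀ (K : Type) [Field K] [Algebra F K], ∀ x : Fin n → Fin r → K,
        ((∃ f ∈ I, MvPolynomial.aeval (fun p : Fin n × Fin r => x p.1 p.2) f ≠ 0) ↔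
          GeneratesAsNonUnitalAlgebra K
            (Set.range fun i : Fin n =>
              ∑ j : Fin r, x i j • ((1 : K) ⊗ₜ[F] b j))) := by
  refine ⟨Ideal.span (Set.range (iterProdMinor (ι := Fin n) b r)), fun K _ _ x => ?_⟩
  have : FiniteDimensional K (K ⊗[F] A) := .of_basis (b.baseChange K)
  have hr : finrank K (K ⊗[F] A) = r := by simp [finrank_eq_card_basis (b.baseChange K)]
  rw [← AlgHom.coe_toRingHom, Ideal.exists_mem_span_apply_ne_zero_iff, Set.exists_range_iff,
    generates_iff_iterProdSpan_eq_top, hr, iterProdSpan,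
    (b.baseChange K).span_range_eq_top_iff_exists_det_ne_zero]
  simp only [AlgHom.coe_toRingHom, aeval_iterProdMinor]

/-- There is a Zariski-open subscheme U of (𝔸ʳ)ⁿ (described by an ideal I of polynomials in
the n·r coordinates: a point lies in U iff some element of I does not vanish at it) whose
K-points, for every field extension K/F, are exactly the n-tuples generating A ⊗ K as a
non-unital K-algebra. -/
theorem generating_tuples_open (F : Type) [Field F] [Infinite F]
    (A : Type) [NonUnitalNonAssocRing A] [Module F A]
    [SMulCommClass F A A] [IsScalarTower F A A]
    (r : ℕ) (b : Module.Basis (Fin r) F A) (n : ℕ) :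
    ∃ I : Ideal (MvPolynomial (Fin n × Fin r) F),
      ∀ (K : Type) [Field K] [Algebra F K], ∀ x : Fin n → Fin r → K,
        ((∃ f ∈ I, MvPolynomial.aeval (fun p : Fin n × Fin r => x p.1 p.2) f ≠ 0) ↔
          GeneratesAsNonUnitalAlgebra K
            (Set.range fun i : Fin n =>
              ∑ j : Fin r, x i j • ((1 : K) ⊗ₜ[F] b j))) :=
  generating_tuples_open_general F A r b n
end

section
/- Let F be a finite field. Every finite-dimensional central simple F-algebra is isomorphic to a matrix algebra Mat_n(F) for some n; consequently, every form of Mat_n(F) over a finite field F is isomorphic to Mat_n(F). -/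
/-!
By Wedderburn–Artin, `A ≅ Matₙ(D)` for a finite-dimensional division algebra `D` over `F`.
Since `F` is finite, so is `D`, hence `D` is a field by Wedderburn's little theorem. The centre
of `Matₙ(D)` is `D`, and it is `F` because `A` is central, so `D = F`. For the second claim,
base change preserves dimension, so `Matₘ(F) ≅ A` and `Matₙ(K) ≅ K ⊗ A` force `m² = n²`.
-/

open TensorProduct

theorem Algebra.IsCentral.of_matrix (K D ι : Type*) [CommSemiring K] [Semiring D] [Algebra K D]
    [Fintype ι] [DecidableEq ι] [Nonempty ι] [Algebra.IsCentral K (Matrix ι ι D)] :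
    Algebra.IsCentral K D where
  out x hx := by
    have hscalar : Matrix.scalar ι x ∈ Subalgebra.center K (Matrix ι ι D) := by
      rw [Matrix.subalgebraCenter_eq_scalarAlgHom_map]
      exact ⟨x, hx, rfl⟩
    obtain ⟨c, hc⟩ := (Algebra.IsCentral.mem_center_iff K).mp hscalar
    obtain ⟨i⟩ := ‹Nonempty ι›
    exact ⟨c, by simpa [Matrix.algebraMap_matrix_apply] using (congrFun (congrFun hc i) i).symm⟩

theorem Algebra.IsCentral.exists_algEquiv_matrix_of_finite (F A : Type*) [Field F] [Finite F]
    [Ring A] [Algebra F A] [FiniteDimensional F A] [Algebra.IsCentral F A] [IsSimpleRing A] :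
    ∃ n : ℕ, Nonempty (A ≃ₐ[F] Matrix (Fin n) (Fin n) F) := by
  have : IsArtinianRing A := IsArtinianRing.of_finite F A
  obtain ⟨n, _, D, _, _, _, ⟨e⟩⟩ := IsSimpleRing.exists_algEquiv_matrix_divisionRing_finite F A
  have : Algebra.IsCentral F (Matrix (Fin n) (Fin n) D) := .of_algEquiv F A _ e
  have : Algebra.IsCentral F D := .of_matrix F D (Fin n)
  have : Finite D := Module.finite_of_finite F
  -- `D` is a field by `littleWedderburn`, so a central `F`-algebra structure on it is trivial.
  let eD : F ≃ₐ[F] D :=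
    .ofBijective (Algebra.ofId F D) (Algebra.IsCentral.baseField_essentially_unique F D D)
  exact ⟨n, ⟨e.trans eD.symm.mapMatrix⟩⟩

theorem Module.finrank_eq_mul_self_of_algEquiv_matrix {F A : Type*} [Field F] [Ring A]
    [Algebra F A] {n : ℕ} (e : A ≃ₐ[F] Matrix (Fin n) (Fin n) F) : finrank F A = n * n := by
  rw [e.toLinearEquiv.finrank_eq, Module.finrank_matrix]
  simp

/-- Wedderburn: every central simple algebra over a finite field F is a matrix algebra over F;
consequently every form of Matₙ(F) (an algebra becoming isomorphic to Matₙ over some field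
extension) is isomorphic to Matₙ(F). -/
theorem central_simple_over_finite_field (F : Type) [Field F] [Finite F]
    (A : Type) [Ring A] [Algebra F A] [FiniteDimensional F A]
    [Algebra.IsCentral F A] [IsSimpleRing A] :
    (∃ n : ℕ, Nonempty (A ≃ₐ[F] Matrix (Fin n) (Fin n) F)) ∧
    (∀ (n : ℕ) (K : Type) [Field K] [Algebra F K],
      Nonempty ((K ⊗[F] A) ≃ₐ[K] Matrix (Fin n) (Fin n) K) →
      Nonempty (A ≃ₐ[F] Matrix (Fin n) (Fin n) F)) := by
  obtain ⟨m, ⟨e⟩⟩ := Algebra.IsCentral.exists_algEquiv_matrix_of_finite F A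
  refine ⟨⟨m, ⟨e⟩⟩, fun n K _ _ ⟨eK⟩ => ?_⟩
  have hmn : m * m = n * n := by
    rw [← Module.finrank_eq_mul_self_of_algEquiv_matrix e,
      ← Module.finrank_eq_mul_self_of_algEquiv_matrix eK, Module.finrank_baseChange]
  obtain rfl : m = n := Nat.mul_self_inj.mp hmn
  exact ⟨e⟩
end

section
/- Let F be an infinite field and let A = Mat_{d_1}(F) × ... × Mat_{d_r}(F) be a finite product of matrix algebras over F. Then A can be generated by two elements as a non-unital F-algebra. -/
/-!
Take `x` block diagonal with pairwise distinct nonzero diagonal entries and `y` with every block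
the all-ones matrix. Polynomials without constant term, evaluated at `x`, realise every function
of the diagonal entries (interpolate `f / μ` and multiply by `x`, whose entries `μ` are nonzero),
so they produce every diagonal matrix unit `E_kk` of every block; then `E_kk * y * E_ll = E_kl`,
and these matrix units span the product. The infinite field supplies the distinct entries.
-/

open TensorProduct

open Polynomial

theorem generatesAsNonUnitalAlgebra_iff_adjoin_eq_top_s19 {R A : Type*} [CommSemiring R]
    [NonUnitalNonAssocSemiring A] [Module R A] [IsScalarTower R A A] [SMulCommClass R A A]
    {s : Set A} : GeneratesAsNonUnitalAlgebra R s ↔ NonUnitalAlgebra.adjoin R s = ⊤ := by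
  refine ⟨fun h => ?_, fun h B hs hB => ?_⟩
  · rw [← NonUnitalAlgebra.toSubmodule_eq_top]
    exact h _ (NonUnitalAlgebra.subset_adjoin R) fun _ hx _ hy =>
      (NonUnitalAlgebra.adjoin R s).mul_mem hx hy
  · let B' : NonUnitalSubalgebra R A := { B with mul_mem' := fun {a b} ha hb => hB a ha b hb }
    have : NonUnitalAlgebra.adjoin R s ≤ B' := NonUnitalAlgebra.adjoin_le hs
    rw [h, top_le_iff] at this
    exact NonUnitalAlgebra.toSubmodule_eq_top.2 this

theorem mul_aeval_mem_nonUnitalAlgebra_adjoin_singleton {R A : Type*} [CommSemiring R]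
    [Semiring A] [Algebra R A] (x : A) (p : R[X]) :
    x * aeval x p ∈ NonUnitalAlgebra.adjoin R {x} := by
  induction p using Polynomial.induction_on with
  | C a =>
    rw [aeval_C, ← Algebra.commutes, ← Algebra.smul_def]
    exact Submodule.smul_mem _ a (NonUnitalAlgebra.self_mem_adjoin_singleton R x)
  | add p q hp hq => rw [map_add, mul_add]; exact add_mem hp hq
  | monomial n a h =>
    rw [pow_succ, ← mul_assoc, map_mul, aeval_X, ← mul_assoc]
    exact mul_mem h (NonUnitalAlgebra.self_mem_adjoin_singleton R x)

theorem Pi.nonUnitalAlgebra_adjoin_singleton_eq_top {S F : Type*} [Finite S] [Field F]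
    {μ : S → F} (hμ : Function.Injective μ) (hμ0 : ∀ s, μ s ≠ 0) :
    NonUnitalAlgebra.adjoin F {μ} = ⊤ := by
  classical
  have := Fintype.ofFinite S
  refine NonUnitalAlgebra.eq_top_iff.2 fun f => ?_
  convert mul_aeval_mem_nonUnitalAlgebra_adjoin_singleton μ
    (Lagrange.interpolate Finset.univ μ (f / μ)) using 1
  ext s
  rw [Pi.mul_apply, aeval_pi_apply₂, coe_aeval_eq_eval,
    Lagrange.eval_interpolate_at_node _ hμ.injOn (Finset.mem_univ s), Pi.div_apply,
    mul_div_cancel₀ _ (hμ0 s)]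

theorem exists_injective_ne_zero (S : Type*) [Finite S] (F : Type*) [Zero F] [Infinite F] :
    ∃ μ : S → F, Function.Injective μ ∧ ∀ s, μ s ≠ 0 := by
  have : Infinite {a : F // a ≠ 0} := (Set.finite_singleton (0 : F)).infinite_compl.to_subtype
  obtain ⟨e⟩ := (Function.Embedding.total S {a : F // a ≠ 0}).resolve_right
    fun ⟨e⟩ => isEmptyElim e
  exact ⟨fun s => e s, Subtype.val_injective.comp e.injective, fun s => (e s).2⟩

namespace Matrix

variable (R : Type*) [CommSemiring R] {ι : Type*} (n : ι → Type*) [∀ i, Fintype (n i)]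
  [∀ i, DecidableEq (n i)]

def sigmaDiagonalAlgHom : ((Σ i, n i) → R) →ₐ[R] ∀ i, Matrix (n i) (n i) R :=
  AlgHom.pi fun i =>
    (diagonalAlgHom R).comp (AlgHom.pi fun k => Pi.evalAlgHom R (fun _ => R) ⟨i, k⟩)

variable {R n}

theorem sigmaDiagonalAlgHom_single_one [DecidableEq ι] (i : ι) (k : n i) :
    sigmaDiagonalAlgHom R n (Pi.single ⟨i, k⟩ 1) = Pi.single i (single k k 1) := by
  ext j : 1
  obtain rfl | hj := eq_or_ne j i
  · rw [Pi.single_eq_same, ← diagonal_single]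
    simp [sigmaDiagonalAlgHom, Pi.single_apply]
  · ext a b
    simp [sigmaDiagonalAlgHom, diagonal_apply, hj]

theorem exists_pair_nonUnitalAlgebra_adjoin_pi_eq_top (F : Type*) [Field F] [Infinite F]
    {ι : Type*} [Finite ι] (n : ι → Type*) [∀ i, Fintype (n i)] :
    ∃ x y : ∀ i, Matrix (n i) (n i) F, NonUnitalAlgebra.adjoin F {x, y} = ⊤ := by
  classical
  have := Fintype.ofFinite ι
  obtain ⟨μ, hμ, hμ0⟩ := exists_injective_ne_zero (Σ i, n i) F
  set x := sigmaDiagonalAlgHom F n μ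
  set y : ∀ i, Matrix (n i) (n i) F := fun _ => of fun _ _ => 1
  refine ⟨x, y, ?_⟩
  set T := NonUnitalAlgebra.adjoin F {x, y}
  have hdiag (i : ι) (k : n i) : Pi.single i (single k k 1) ∈ T := by
    have hx : NonUnitalAlgebra.adjoin F {x} ≤ T := NonUnitalAlgebra.adjoin_mono (by simp)
    rw [← NonUnitalAlgHom.map_adjoin_singleton,
      Pi.nonUnitalAlgebra_adjoin_singleton_eq_top hμ hμ0] at hx
    exact hx ⟨_, NonUnitalAlgebra.mem_top, sigmaDiagonalAlgHom_single_one i k⟩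
  have hsingle (i : ι) (k l : n i) : Pi.single i (single k l 1) ∈ T := by
    have hy : y ∈ T := NonUnitalAlgebra.subset_adjoin F (by simp)
    have hkyl := mul_mem (mul_mem (hdiag i k) hy) (hdiag i l)
    rw [← Pi.single_mul_left, ← Pi.single_mul, single_mul_mul_single] at hkyl
    simpa [y] using hkyl
  rw [← NonUnitalAlgebra.toSubmodule_eq_top, eq_top_iff,
    ← (Pi.basis fun i => stdBasis F (n i) (n i)).span_eq, Submodule.span_le]
  rintro _ ⟨⟨i, k, l⟩, rfl⟩
  rw [Pi.basis_apply, stdBasis_eq_single]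
  exact hsingle i k l

end Matrix

/-- A finite product of matrix algebras over an infinite field F can be generated by two
elements as a non-unital F-algebra. -/
theorem product_of_matrix_algebras_two_generators (F : Type) [Field F] [Infinite F]
    (r : ℕ) (dims : Fin r → ℕ) :
    ∃ x y : (∀ i : Fin r, Matrix (Fin (dims i)) (Fin (dims i)) F),
      GeneratesAsNonUnitalAlgebra F ({x, y} :
        Set (∀ i : Fin r, Matrix (Fin (dims i)) (Fin (dims i)) F)) := by
  obtain ⟨x, y, h⟩ := Matrix.exists_pair_nonUnitalAlgebra_adjoin_pi_eq_top F fun i => Fin (dims i)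
  exact ⟨x, y, generatesAsNonUnitalAlgebra_iff_adjoin_eq_top_s19.2 h⟩
end
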